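/- arXiv:1611.06506 — 7 statements merged into one kernel-verified Lean document; each statement's English description precedes it below -/
import Mathlib

section
/- Let p be a prime and define f_p(n) = ∏_{1 ≤ i ≤ n, p∤i} i. Then for an odd prime p with α ≥ 1, or for p = 2 with α ≥ 2, one has p^{2α} divides f_p(p^α n) - f_p(p^α)^n for all n ≥ 0. -/
/-- `f_p(n) = ∏_{1 ≤ i ≤ n, p ∤ i} i`. -/
def fp (p n : ℕ) : ℕ :=
  ∏ i ∈ (Finset.Icc 1 n).filter (fun i => ¬ p ∣ i), i

/-!
Write `q = p ^ α` and `S` for the integers in `[1, q]` prime to `p`. The block of `f_p(q (n + 1))`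
beyond `q n` is `∏_{j ∈ S} (q n + j)`, and since `(q n)² ≡ 0 mod q²` this is
`f_p(q) + q n · ∑_{j ∈ S} ∏_{k ∈ S \ {j}} k` modulo `q²`. Pairing `j` with `q - j` shows that the
sum is `0 mod q`; a fixed point would be `j = q / 2` prime to `p`, which only happens for `q = 2`.
Hence each block is `≡ f_p(q) mod q²`, and induction on `n` concludes.
-/

open Finset

namespace Finset

variable {ι R : Type*} [CommRing R] [DecidableEq ι]

theorem prod_add_of_mul_self_eq_zero (s : Finset ι) (f : ι → R) {t : R} (ht : t * t = 0) :
    ∏ x ∈ s, (f x + t) = ∏ x ∈ s, f x + t * ∑ x ∈ s, ∏ y ∈ s.erase x, f y := by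
  induction s using Finset.induction_on with
  | empty => simp
  | insert a s ha ih =>
    have herase : ∀ x ∈ s, ∏ y ∈ (insert a s).erase x, f y = f a * ∏ y ∈ s.erase x, f y :=
      fun x hx => by
        rw [erase_insert_of_ne (ne_of_mem_of_not_mem hx ha).symm,
          prod_insert (fun h => ha (mem_of_mem_erase h))]
    rw [prod_insert ha, prod_insert ha, sum_insert ha, erase_insert ha, ih,
      sum_congr rfl herase, ← mul_sum]
    linear_combination (∑ x ∈ s, ∏ y ∈ s.erase x, f y) * ht

theorem sum_prod_erase_eq_zero_of_involution (s : Finset ι) (f : ι → R) (g : ι → ι)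
    (hg_mem : ∀ x ∈ s, g x ∈ s) (hg_ne : ∀ x ∈ s, g x ≠ x) (hg_invol : ∀ x ∈ s, g (g x) = x)
    (hf : ∀ x ∈ s, f x + f (g x) = 0) :
    ∑ x ∈ s, ∏ y ∈ s.erase x, f y = 0 := by
  refine sum_involution (fun x _ => g x) (fun x hx => ?_) (fun x hx _ => hg_ne x hx)
    (fun x hx => hg_mem x hx) (fun x hx => hg_invol x hx)
  have hgx : g x ∈ s.erase x := mem_erase.mpr ⟨hg_ne x hx, hg_mem x hx⟩
  have hx' : x ∈ s.erase (g x) := mem_erase.mpr ⟨(hg_ne x hx).symm, hx⟩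
  rw [← mul_prod_erase _ _ hgx, ← mul_prod_erase _ _ hx', erase_right_comm, ← add_mul,
    add_comm, hf x hx, zero_mul]

end Finset

theorem fp_add_of_dvd {p a : ℕ} (b : ℕ) (hpa : p ∣ a) :
    fp p (a + b) = fp p a * ∏ j ∈ (Icc 1 b).filter (fun j => ¬ p ∣ j), (a + j) := by
  have hdisj : Disjoint (Icc 1 a) ((Icc 1 b).map (addLeftEmbedding a)) := by
    rw [map_add_left_Icc, disjoint_left]
    intro x hx hx'
    simp only [mem_Icc] at hx hx'
    omega
  have hunion : Icc 1 (a + b) = Icc 1 a ∪ (Icc 1 b).map (addLeftEmbedding a) := by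
    rw [map_add_left_Icc]
    ext x
    simp only [mem_union, mem_Icc]
    omega
  rw [fp, fp, hunion, filter_union, prod_union (disjoint_filter_filter hdisj), filter_map,
    prod_map]
  simp only [addLeftEmbedding_apply, Function.comp_def, Nat.dvd_add_right hpa]

section PrimePower

variable {p α : ℕ} (hp : p.Prime) (h : (Odd p ∧ 1 ≤ α) ∨ (p = 2 ∧ 2 ≤ α))
include hp h

theorem two_mul_ne_pow_of_not_dvd {j : ℕ} (hj : ¬ p ∣ j) : 2 * j ≠ p ^ α := by
  intro hjα
  rcases h with ⟨hodd, hα⟩ | ⟨rfl, hα⟩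
  · have hp2 : p ∣ 2 * j := hjα ▸ dvd_pow_self p (by omega)
    rcases hp.dvd_mul.mp hp2 with h2 | h2
    · obtain rfl := (Nat.prime_dvd_prime_iff_eq hp Nat.prime_two).mp h2
      exact absurd hodd (by decide)
    · exact hj h2
  · have h4 : 2 ^ 2 ∣ 2 * j := hjα ▸ pow_dvd_pow 2 hα
    omega

theorem pow_dvd_sum_prod_erase_coprime :
    p ^ α ∣ ∑ j ∈ (Icc 1 (p ^ α)).filter (fun i => ¬ p ∣ i),
      ∏ k ∈ ((Icc 1 (p ^ α)).filter (fun i => ¬ p ∣ i)).erase j, k := by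
  have hpq : p ∣ p ^ α := dvd_pow_self p (by omega)
  have hlt : ∀ j ∈ (Icc 1 (p ^ α)).filter (fun i => ¬ p ∣ i), 0 < j ∧ j < p ^ α := by
    intro j hj
    simp only [mem_filter, mem_Icc] at hj
    exact ⟨hj.1.1, lt_of_le_of_ne hj.1.2 (fun hjq => hj.2 (hjq ▸ hpq))⟩
  rw [← ZMod.natCast_eq_zero_iff, Nat.cast_sum]
  simp only [Nat.cast_prod]
  refine sum_prod_erase_eq_zero_of_involution _ _ (fun j => p ^ α - j) (fun j hj => ?_)
    (fun j hj hjq => two_mul_ne_pow_of_not_dvd hp h (mem_filter.mp hj).2 (by omega))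
    (fun j hj => by have := hlt j hj; omega) (fun j hj => ?_)
  · have := hlt j hj
    simp only [mem_filter, mem_Icc] at hj ⊢
    refine ⟨by omega, fun hdvd => hj.2 ?_⟩
    simpa [Nat.sub_sub_self hj.1.2] using Nat.dvd_sub hpq hdvd
  · rw [← Nat.cast_add, Nat.add_sub_cancel' (hlt j hj).2.le, ZMod.natCast_self]

theorem prod_pow_mul_add_modEq_fp (n : ℕ) :
    ∏ j ∈ (Icc 1 (p ^ α)).filter (fun i => ¬ p ∣ i), (p ^ α * n + j) ≡ fp p (p ^ α)
      [MOD p ^ (2 * α)] := by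
  obtain ⟨m, hm⟩ := pow_dvd_sum_prod_erase_coprime hp h
  have hsq_zero : ∀ a b : ℕ, ((p ^ α * a : ℕ) : ZMod (p ^ (2 * α))) * ((p ^ α * b : ℕ)) = 0 := by
    intro a b
    rw [← Nat.cast_mul, ZMod.natCast_eq_zero_iff]
    exact ⟨a * b, by ring⟩
  rw [← ZMod.natCast_eq_natCast_iff, fp, Nat.cast_prod, Nat.cast_prod, prod_congr rfl fun j _ => (Nat.cast_add (p ^ α * n) j).trans (add_comm _ _),
    prod_add_of_mul_self_eq_zero _ _ (hsq_zero n n)]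
  have hsum := congrArg (Nat.cast : ℕ → ZMod (p ^ (2 * α))) hm
  push_cast at hsum
  rw [hsum, ← Nat.cast_pow, ← Nat.cast_mul, hsq_zero, add_zero]

end PrimePower

theorem stmt2 (p α : ℕ) (hp : p.Prime)
    (h : (Odd p ∧ 1 ≤ α) ∨ (p = 2 ∧ 2 ≤ α)) (n : ℕ) :
    ((p : ℤ) ^ (2 * α)) ∣ (fp p (p ^ α * n) : ℤ) - (fp p (p ^ α) : ℤ) ^ n := by
  have hpα : p ∣ p ^ α := dvd_pow_self p (by omega)
  have hmod : fp p (p ^ α) ^ n ≡ fp p (p ^ α * n) [MOD p ^ (2 * α)] := by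
    induction n with
    | zero => rfl
    | succ n ih =>
      rw [pow_succ, mul_add_one, fp_add_of_dvd _ (dvd_mul_of_dvd_left hpα n)]
      exact ih.mul (prod_pow_mul_add_modEq_fp hp h n).symm
  exact_mod_cast Nat.modEq_iff_dvd.mp hmod
end

section
/- Let p be an odd prime, τ an integer, and m = p^α a, l = p^β b with p ∤ a, p ∤ b, α ≥ 1, β ≥ 0. Then p^{2α} divides C(m,l)·C(mτ+l-1, m-1) - C(m/p, l/p)·C((mτ+l)/p - 1, m/p - 1), where the second term is defined to be zero when β = 0. -/
/-!
Write `m = p m'`, `l = p l'` and `mτ + l = p M`. Sorting the factors of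
`C(m, l) = ∏_{j ≤ l} (m - l + j) / j` by whether `p ∣ j` gives `C(m, l) P = C(m', l') Q`
with `P = ∏ j` and `Q = ∏ (m - l + j)` over `j ≤ l`, `p ∤ j`; likewise for `C(mτ + l - 1, m - 1)`.
Pairing `j` with `l - j`, `(m - l + j)(m - j) - j(l - j) = m(m - l)`, so `Q² ≡ P²` modulo
`p^{2γ}`, `γ = min(α, β)`; since `Q ≡ P ≢ 0 (mod p)` and `p` is odd, even `Q ≡ P (mod p^{2γ})`.
The remaining factor `p^{2(α - γ)}` divides `C(m', l') C(M - 1, m' - 1)` by the absorption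
identity `k C(x, k) = x C(x - 1, k - 1)`, which also settles the case `β = 0`.
-/

/-- Binomial coefficient `C(n,k)` with integer upper argument, extended to
negative `n` via `C(n,k) = (-1)^k * C(-n+k-1, k)`. -/
def ichoose (n : ℤ) (k : ℕ) : ℤ :=
  if 0 ≤ n then ((n.toNat).choose k : ℤ)
  else (-1) ^ k * (((-n + k - 1).toNat).choose k : ℤ)

open Finset Polynomial
open scoped Nat

lemma ichoose_eq_ringChoose (x : ℤ) (k : ℕ) : ichoose x k = Ring.choose x k := by
  unfold ichoose
  split_ifs with hx
  · lift x to ℕ using hx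
    rw [Int.toNat_natCast, Ring.choose_natCast]
  · obtain ⟨n, hn⟩ : ∃ n : ℕ, -x + k - 1 = n := ⟨(-x + k - 1).toNat, by omega⟩
    have h := Ring.choose_neg (-x) k
    rw [neg_neg] at h
    rw [h, hn, Ring.choose_natCast, Int.toNat_natCast, Int.negOnePow_def, Units.smul_def]
    simp

lemma factorial_mul_ichoose (x : ℤ) (k : ℕ) :
    k ! * ichoose x k = (descPochhammer ℤ k).eval x := by
  rw [ichoose_eq_ringChoose, eval_eq_smeval, Ring.descPochhammer_eq_factorial_smul_choose,
    nsmul_eq_mul]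

lemma ichoose_succ_mul (x : ℤ) (k : ℕ) :
    ichoose x (k + 1) * (k + 1) = x * ichoose (x - 1) k := by
  have h := factorial_mul_ichoose x (k + 1)
  rw [descPochhammer_succ_left, eval_mul, eval_comp, eval_X, eval_sub, eval_X, eval_one,
    ← factorial_mul_ichoose, Nat.factorial_succ] at h
  apply mul_left_cancel₀ (Nat.cast_ne_zero.mpr (Nat.factorial_ne_zero k) : (k ! : ℤ) ≠ 0)
  push_cast at h
  linear_combination h

lemma ichoose_add_mul_prod_Icc (y : ℤ) (k : ℕ) :
    ichoose (y + k) k * ∏ j ∈ Icc 1 k, (j : ℤ) = ∏ j ∈ Icc 1 k, (y + j) := by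
  induction k with
  | zero => simp [ichoose]
  | succ k ih =>
    have h := ichoose_succ_mul (y + (k + 1 : ℕ)) k
    rw [prod_Icc_succ_top (by omega), prod_Icc_succ_top (by omega), ← ih]
    push_cast at h ⊢
    rw [show y + (k + 1) - 1 = y + k by ring] at h
    linear_combination (∏ j ∈ Icc 1 k, (j : ℤ)) * h

lemma Int.modEq_of_sq_modEq {p x y : ℤ} {e : ℕ} (hp : Prime p) (hp2 : ¬ p ∣ 2) (hy : ¬ p ∣ y)
    (h1 : x ≡ y [ZMOD p]) (h2 : x ^ 2 ≡ y ^ 2 [ZMOD p ^ e]) : x ≡ y [ZMOD p ^ e] := by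
  rw [Int.modEq_iff_dvd] at h1 h2 ⊢
  have hsum : ¬ p ∣ y + x := by
    intro h
    have h2y : p ∣ 2 * y := by
      rw [show 2 * y = (y + x) + (y - x) by ring]
      exact dvd_add h h1
    exact (hp.dvd_or_dvd h2y).elim hp2 hy
  have hcop : IsCoprime (p ^ e) (y + x) := ((hp.coprime_iff_not_dvd).mpr hsum).pow_left
  refine hcop.dvd_of_dvd_mul_left ?_
  rwa [show (y + x) * (y - x) = y ^ 2 - x ^ 2 by ring]

def primeToIcc (p k : ℕ) : Finset ℕ := {j ∈ Icc 1 k | ¬ p ∣ j}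

section primeToIcc

variable {p : ℕ}

lemma primeToIcc_sub_one {n : ℕ} (hn : p ∣ n) : primeToIcc p (n - 1) = primeToIcc p n := by
  ext j
  simp only [primeToIcc, mem_filter, mem_Icc]
  constructor
  · rintro ⟨⟨h1, h2⟩, h3⟩
    exact ⟨⟨h1, by omega⟩, h3⟩
  · rintro ⟨⟨h1, h2⟩, h3⟩
    have : j ≠ n := by rintro rfl; exact h3 hn
    exact ⟨⟨h1, by omega⟩, h3⟩

lemma prod_Icc_eq_prod_mul_mul_prod_primeToIcc (hp : 0 < p) (f : ℕ → ℤ) (k : ℕ) :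
    ∏ j ∈ Icc 1 k, f j = (∏ j ∈ Icc 1 (k / p), f (p * j)) * ∏ j ∈ primeToIcc p k, f j := by
  rw [← prod_filter_mul_prod_filter_not (Icc 1 k) (p ∣ ·), primeToIcc]
  congr 1
  refine (prod_nbij' (p * ·) (· / p) ?_ ?_ ?_ ?_ fun _ _ => rfl).symm
  · intro j hj
    simp only [mem_filter, mem_Icc] at hj ⊢
    refine ⟨⟨by nlinarith, ?_⟩, dvd_mul_right p j⟩
    exact (Nat.le_div_iff_mul_le hp).mp hj.2 |>.trans_eq' (mul_comm _ _)
  · intro j hj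
    simp only [mem_filter, mem_Icc] at hj ⊢
    exact ⟨(Nat.one_le_div_iff hp).mpr (Nat.le_of_dvd hj.1.1 hj.2), Nat.div_le_div_right hj.1.2⟩
  · intro j _
    exact Nat.mul_div_cancel_left j hp
  · intro j hj
    simp only [mem_filter] at hj
    exact Nat.mul_div_cancel' hj.2

lemma prod_primeToIcc_sub {n : ℕ} (hn : p ∣ n) (f : ℕ → ℤ) :
    ∏ j ∈ primeToIcc p n, f (n - j) = ∏ j ∈ primeToIcc p n, f j := by
  have hmem : ∀ j ∈ primeToIcc p n, n - j ∈ primeToIcc p n := by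
    intro j hj
    simp only [primeToIcc, mem_filter, mem_Icc] at hj ⊢
    have : j ≠ n := by rintro rfl; exact hj.2 hn
    refine ⟨⟨by omega, by omega⟩, fun h => hj.2 ?_⟩
    simpa [Nat.sub_sub_self hj.1.2] using Nat.dvd_sub hn h
  refine prod_nbij' (n - ·) (n - ·) hmem hmem ?_ ?_ fun _ _ => rfl <;> intro j hj <;>
    simp only [primeToIcc, mem_filter, mem_Icc] at hj <;> omega

lemma ichoose_mul_prod_primeToIcc (hp : 0 < p) (z : ℤ) (k : ℕ) :
    ichoose (p * z + k) k * ∏ j ∈ primeToIcc p k, (j : ℤ) =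
      ichoose (z + (k / p : ℕ)) (k / p) * ∏ j ∈ primeToIcc p k, (p * z + j) := by
  have hk := ichoose_add_mul_prod_Icc (p * z) k
  have hkp := ichoose_add_mul_prod_Icc z (k / p)
  rw [prod_Icc_eq_prod_mul_mul_prod_primeToIcc hp,
    prod_Icc_eq_prod_mul_mul_prod_primeToIcc hp (p * z + ·)] at hk
  have hscale : ∀ g : ℕ → ℤ, ∏ j ∈ Icc 1 (k / p), (p : ℤ) * g j =
      (p : ℤ) ^ (k / p) * ∏ j ∈ Icc 1 (k / p), g j := by
    intro g
    rw [prod_mul_distrib, prod_const, Nat.card_Icc, Nat.add_sub_cancel]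
  simp only [Nat.cast_mul, hscale,
    show ∀ j : ℕ, (p : ℤ) * z + (p * j : ℤ) = p * (z + j) from fun j => by ring] at hk
  have hne : (p : ℤ) ^ (k / p) * ∏ j ∈ Icc 1 (k / p), (j : ℤ) ≠ 0 := by
    refine mul_ne_zero (pow_ne_zero _ (by exact_mod_cast hp.ne')) (prod_ne_zero_iff.mpr ?_)
    intro j hj
    have := (mem_Icc.mp hj).1
    positivity
  apply mul_left_cancel₀ hne
  rw [← hkp] at hk
  linear_combination hk

lemma sq_prod_primeToIcc_modEq {n : ℕ} (hn : p ∣ n) {q y : ℤ} (hy : q ∣ y) (hyn : q ∣ y + n) :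
    (∏ j ∈ primeToIcc p n, (y + j)) ^ 2 ≡ (∏ j ∈ primeToIcc p n, (j : ℤ)) ^ 2 [ZMOD q ^ 2] := by
  have hsq : ∀ f : ℕ → ℤ,
      (∏ j ∈ primeToIcc p n, f j) ^ 2 = ∏ j ∈ primeToIcc p n, f j * f (n - j) := by
    intro f
    rw [sq, prod_mul_distrib, prod_primeToIcc_sub hn]
  rw [hsq, hsq]
  refine Int.ModEq.prod fun j hj => ?_
  have hjn : j ≤ n := (mem_Icc.mp (mem_filter.mp hj).1).2
  rw [Nat.cast_sub hjn, Int.modEq_iff_dvd, sq,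
    show (j : ℤ) * (n - j) - (y + j) * (y + (n - j)) = -(y * (y + n)) by ring, dvd_neg]
  exact mul_dvd_mul hy hyn

lemma not_dvd_prod_primeToIcc (hp : p.Prime) (n : ℕ) :
    ¬ (p : ℤ) ∣ ∏ j ∈ primeToIcc p n, (j : ℤ) := by
  rw [Prime.dvd_finsetProd_iff (Nat.prime_iff_prime_int.mp hp)]
  rintro ⟨j, hj, hpj⟩
  exact (mem_filter.mp hj).2 (Int.natCast_dvd_natCast.mp hpj)

lemma prod_primeToIcc_mul_prod_primeToIcc_modEq (hp : p.Prime) (hodd : Odd p)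
    {n₁ n₂ γ : ℕ} {z₁ z₂ : ℤ} (hn₁ : p ∣ n₁) (hn₂ : p ∣ n₂) (hz₁ : (p : ℤ) ^ γ ∣ p * z₁)
    (hzn₁ : (p : ℤ) ^ γ ∣ p * z₁ + n₁) (hz₂ : (p : ℤ) ^ γ ∣ p * z₂)
    (hzn₂ : (p : ℤ) ^ γ ∣ p * z₂ + n₂) :
    (∏ j ∈ primeToIcc p n₁, ((p : ℤ) * z₁ + j)) * ∏ j ∈ primeToIcc p n₂, ((p : ℤ) * z₂ + j) ≡
      (∏ j ∈ primeToIcc p n₁, (j : ℤ)) * ∏ j ∈ primeToIcc p n₂, (j : ℤ) [ZMOD p ^ (2 * γ)] := by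
  have hpZ : Prime (p : ℤ) := Nat.prime_iff_prime_int.mp hp
  have hp2 : ¬ (p : ℤ) ∣ 2 := fun h => by
    have := (Nat.prime_dvd_prime_iff_eq hp Nat.prime_two).mp (Int.natCast_dvd_natCast.mp h)
    subst this
    exact Nat.not_odd_iff_even.mpr even_two hodd
  have hP : ¬ (p : ℤ) ∣ (∏ j ∈ primeToIcc p n₁, (j : ℤ)) * ∏ j ∈ primeToIcc p n₂, (j : ℤ) :=
    fun h => (hpZ.dvd_or_dvd h).elim (not_dvd_prod_primeToIcc hp _) (not_dvd_prod_primeToIcc hp _)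
  have hmodp : (∏ j ∈ primeToIcc p n₁, ((p : ℤ) * z₁ + j)) *
      ∏ j ∈ primeToIcc p n₂, ((p : ℤ) * z₂ + j) ≡
      (∏ j ∈ primeToIcc p n₁, (j : ℤ)) * ∏ j ∈ primeToIcc p n₂, (j : ℤ) [ZMOD p] := by
    refine Int.ModEq.mul (Int.ModEq.prod fun j _ => ?_) (Int.ModEq.prod fun j _ => ?_) <;>
      exact (Int.modEq_iff_dvd.mpr (by simp)).symm
  refine Int.modEq_of_sq_modEq hpZ hp2 hP hmodp ?_
  rw [mul_pow, mul_pow, mul_comm 2 γ, pow_mul]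
  exact (sq_prod_primeToIcc_modEq hn₁ hz₁ hzn₁).mul (sq_prod_primeToIcc_modEq hn₂ hz₂ hzn₂)

end primeToIcc

lemma dvd_of_pow_add_dvd_pow_mul {p u z : ℤ} {e f : ℕ} (hp : Prime p) (hu : ¬ p ∣ u)
    (h : p ^ (e + f) ∣ p ^ e * u * z) : p ^ f ∣ z := by
  rw [pow_add, mul_assoc, mul_dvd_mul_iff_left (pow_ne_zero e hp.ne_zero)] at h
  exact ((hp.coprime_iff_not_dvd.mpr hu).pow_left).dvd_of_dvd_mul_left h

lemma pow_dvd_ichoose {p x u : ℤ} {n e f : ℕ} (hp : Prime p) (hx : p ^ (e + f) ∣ x)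
    (hn : (n : ℤ) = p ^ e * u) (hu : ¬ p ∣ u) : p ^ f ∣ ichoose x n := by
  obtain ⟨n, rfl⟩ : ∃ n', n = n' + 1 := by
    refine Nat.exists_eq_add_one.mpr (Nat.pos_of_ne_zero ?_)
    rintro rfl
    exact hu ((mul_eq_zero.mp hn.symm).resolve_left (pow_ne_zero e hp.ne_zero) ▸ dvd_zero p)
  refine dvd_of_pow_add_dvd_pow_mul (e := e) hp hu ?_
  rw [← hn, mul_comm, Nat.cast_succ, ichoose_succ_mul]
  exact hx.mul_right _

lemma pow_dvd_ichoose_sub_one {p x v : ℤ} {k e f : ℕ} (hp : Prime p) (hx : x = p ^ e * v)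
    (hv : ¬ p ∣ v) (hk : p ^ (e + f) ∣ (k : ℤ)) (hk0 : k ≠ 0) :
    p ^ f ∣ ichoose (x - 1) (k - 1) := by
  obtain ⟨k, rfl⟩ := Nat.exists_eq_add_one.mpr (Nat.pos_of_ne_zero hk0)
  refine dvd_of_pow_add_dvd_pow_mul (e := e) hp hv ?_
  rw [← hx, Nat.add_sub_cancel, ← ichoose_succ_mul, ← Nat.cast_succ]
  exact hk.mul_left _

lemma pow_dvd_ichoose_mul_ichoose {p x u v : ℤ} {k n e f : ℕ} (hp : Prime p)
    (hk : p ^ (e + f) ∣ (k : ℤ)) (hk0 : k ≠ 0) (hn : (n : ℤ) = p ^ e * u) (hu : ¬ p ∣ u)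
    (hx : x = p ^ e * v) (hv : ¬ p ∣ v) :
    p ^ (2 * f) ∣ ichoose k n * ichoose (x - 1) (k - 1) := by
  rw [two_mul, pow_add]
  exact mul_dvd_mul (pow_dvd_ichoose hp hk hn hu) (pow_dvd_ichoose_sub_one hp hx hv hk hk0)

lemma pow_dvd_ichoose_mul_ichoose_of_lt {p : ℕ} (hp : p.Prime) {α β a b : ℕ} (ha : a ≠ 0)
    (hb : ¬ p ∣ b) (hβα : β < α) (τ : ℤ) :
    (p : ℤ) ^ (2 * (α - β)) ∣ ichoose (p ^ α * a : ℕ) (p ^ β * b) *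
      ichoose ((p ^ α * a : ℕ) * τ + (p ^ β * b : ℕ) - 1) (p ^ α * a - 1) := by
  have hpZ : Prime (p : ℤ) := Nat.prime_iff_prime_int.mp hp
  have hbZ : ¬ (p : ℤ) ∣ b := by exact_mod_cast hb
  refine pow_dvd_ichoose_mul_ichoose (e := β) (v := p ^ (α - β) * a * τ + b) hpZ ?_
    (by simp [ha, hp.ne_zero]) (by push_cast; rfl) hbZ ?_ ?_
  · rw [Nat.add_sub_cancel' hβα.le]
    push_cast
    exact dvd_mul_right _ _
  · have hpow : (p : ℤ) ^ α = p ^ β * p ^ (α - β) := by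
      rw [← pow_add, Nat.add_sub_cancel' hβα.le]
    push_cast
    rw [hpow]
    ring
  · intro hv
    have := dvd_sub hv (((dvd_pow_self (p : ℤ) (by omega : α - β ≠ 0)).mul_right a).mul_right τ)
    exact hbZ (by rwa [add_sub_cancel_left] at this)

lemma mul_sub_one_div_self {p m : ℕ} (hp : 0 < p) (hm : m ≠ 0) : (p * m - 1) / p = m - 1 := by
  obtain ⟨m, rfl⟩ := Nat.exists_eq_add_one.mpr (Nat.pos_of_ne_zero hm)
  rw [show p * (m + 1) - 1 = p - 1 + p * m by rw [mul_add_one]; omega,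
    Nat.add_mul_div_left _ _ hp, Nat.div_eq_of_lt (by omega), zero_add, Nat.add_sub_cancel]

lemma pow_dvd_ichoose_mul_ichoose_sub {p : ℕ} (hp : p.Prime) (hodd : Odd p) {m l γ δ : ℕ}
    {M : ℤ} (hm : m ≠ 0) (hγm : (p : ℤ) ^ γ ∣ (p * m : ℕ)) (hγl : (p : ℤ) ^ γ ∣ (p * l : ℕ))
    (hγM : (p : ℤ) ^ γ ∣ p * M)
    (hδ : (p : ℤ) ^ (2 * δ) ∣ ichoose m l * ichoose (M - 1) (m - 1)) :
    (p : ℤ) ^ (2 * (γ + δ)) ∣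
      ichoose (p * m : ℕ) (p * l) * ichoose (p * M - 1) (p * m - 1) -
        ichoose m l * ichoose (M - 1) (m - 1) := by
  have hp0 := hp.pos
  have hpZ : Prime (p : ℤ) := Nat.prime_iff_prime_int.mp hp
  set Pl := ∏ j ∈ primeToIcc p (p * l), (j : ℤ)
  set Ql := ∏ j ∈ primeToIcc p (p * l), ((p : ℤ) * (m - l) + j)
  set Pm := ∏ j ∈ primeToIcc p (p * m), (j : ℤ)
  set Qm := ∏ j ∈ primeToIcc p (p * m), ((p : ℤ) * (M - m) + j)
  have hA : ichoose (p * m : ℕ) (p * l) * Pl = ichoose m l * Ql := by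
    have h := ichoose_mul_prod_primeToIcc hp0 (m - l : ℤ) (p * l)
    rwa [Nat.mul_div_cancel_left _ hp0, sub_add_cancel,
      show (p : ℤ) * (m - l) + (p * l : ℕ) = (p * m : ℕ) by push_cast; ring] at h
  have hB : ichoose (p * M - 1) (p * m - 1) * Pm = ichoose (M - 1) (m - 1) * Qm := by
    have h := ichoose_mul_prod_primeToIcc hp0 (M - m) (p * m - 1)
    have hpm : 1 ≤ p * m := Nat.one_le_iff_ne_zero.mpr (mul_ne_zero hp.ne_zero hm)
    rwa [primeToIcc_sub_one (dvd_mul_right p m), mul_sub_one_div_self hp0 hm,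
      Nat.cast_sub hpm, Nat.cast_sub (Nat.one_le_iff_ne_zero.mpr hm),
      show (p : ℤ) * (M - m) + ((p * m : ℕ) - (1 : ℕ)) = p * M - 1 by push_cast; ring,
      show M - m + ((m : ℕ) - (1 : ℕ) : ℤ) = M - 1 by push_cast; ring] at h
  have hQP : (p : ℤ) ^ (2 * γ) ∣ Ql * Qm - Pl * Pm := by
    refine (prod_primeToIcc_mul_prod_primeToIcc_modEq hp hodd (dvd_mul_right p l)
      (dvd_mul_right p m) ?_ ?_ ?_ ?_).symm.dvd
    · rw [show (p : ℤ) * (m - l) = (p * m : ℕ) - (p * l : ℕ) by push_cast; ring]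
      exact dvd_sub hγm hγl
    · rwa [show (p : ℤ) * (m - l) + (p * l : ℕ) = (p * m : ℕ) by push_cast; ring]
    · rw [show (p : ℤ) * (M - m) = p * M - (p * m : ℕ) by push_cast; ring]
      exact dvd_sub hγM hγm
    · rwa [show (p : ℤ) * (M - m) + (p * m : ℕ) = p * M by push_cast; ring]
  have hP : ¬ (p : ℤ) ∣ Pl * Pm := fun h =>
    (hpZ.dvd_or_dvd h).elim (not_dvd_prod_primeToIcc hp _) (not_dvd_prod_primeToIcc hp _)
  refine (((hpZ.coprime_iff_not_dvd).mpr hP).pow_left).dvd_of_dvd_mul_left ?_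
  rw [show Pl * Pm * (ichoose (p * m : ℕ) (p * l) * ichoose (p * M - 1) (p * m - 1) -
      ichoose m l * ichoose (M - 1) (m - 1)) =
      ichoose m l * ichoose (M - 1) (m - 1) * (Ql * Qm - Pl * Pm) by
    linear_combination ichoose (p * M - 1) (p * m - 1) * Pm * hA + ichoose m l * Ql * hB,
    mul_add, add_comm, pow_add]
  exact mul_dvd_mul hδ hQP

theorem stmt4 (p : ℕ) (hp : p.Prime) (hodd : Odd p) (τ : ℤ)
    (α β a b : ℕ) (hα : 1 ≤ α) (ha : ¬ p ∣ a) (hb : ¬ p ∣ b)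
    (m l : ℕ) (hm : m = p ^ α * a) (hl : l = p ^ β * b) :
    ((p : ℤ) ^ (2 * α)) ∣
      ichoose (m : ℤ) l * ichoose ((m : ℤ) * τ + l - 1) (m - 1) -
        (if β = 0 then 0 else
          ichoose ((m / p : ℕ) : ℤ) (l / p) *
            ichoose (((m : ℤ) * τ + l) / p - 1) (m / p - 1)) := by
  have ha0 : a ≠ 0 := by rintro rfl; exact ha (dvd_zero p)
  subst hm hl
  rcases Nat.eq_zero_or_pos β with rfl | hβ
  · simpa using pow_dvd_ichoose_mul_ichoose_of_lt hp ha0 hb hα τ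
  have hsplit : ∀ e c : ℕ, 1 ≤ e → p ^ e * c = p * (p ^ (e - 1) * c) := fun e c he => by
    rw [← mul_assoc, ← _root_.pow_succ', Nat.sub_add_cancel he]
  have hγm : (p : ℤ) ^ min α β ∣ (p ^ α * a : ℕ) := by
    push_cast; exact (pow_dvd_pow _ (min_le_left _ _)).mul_right _
  have hγl : (p : ℤ) ^ min α β ∣ (p ^ β * b : ℕ) := by
    push_cast; exact (pow_dvd_pow _ (min_le_right _ _)).mul_right _
  have hγN := dvd_add (hγm.mul_right τ) hγl
  simp only [hsplit α a hα, hsplit β b hβ] at hγm hγl hγN ⊢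
  set m := p ^ (α - 1) * a
  set l := p ^ (β - 1) * b
  rw [if_neg hβ.ne', Nat.mul_div_cancel_left _ hp.pos, Nat.mul_div_cancel_left _ hp.pos,
    show ((p * m : ℕ) : ℤ) * τ + (p * l : ℕ) = p * (m * τ + l) by push_cast; ring,
    Int.mul_ediv_cancel_left _ (by exact_mod_cast hp.ne_zero)]
  have hδ : (p : ℤ) ^ (2 * (α - min α β)) ∣ ichoose m l * ichoose (m * τ + l - 1) (m - 1) := by
    rcases le_or_gt α β with h | h
    · simp [h]
    · rw [min_eq_right h.le, show α - β = α - 1 - (β - 1) by omega]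
      exact pow_dvd_ichoose_mul_ichoose_of_lt hp ha0 hb (by omega) τ
  have key := pow_dvd_ichoose_mul_ichoose_sub hp hodd (by simp [m, ha0, hp.ne_zero]) hγm hγl
    (by rwa [show (p : ℤ) * (m * τ + l) = (p * m : ℕ) * τ + (p * l : ℕ) by push_cast; ring]) hδ
  rwa [show min α β + (α - min α β) = α by omega] at key
end

section
/- Let p be a prime, τ an integer, and let a, b be positive integers with p^β exactly dividing both gcd(a,b) and p^α dividing a+b (β ≤ α). Then p^{α-β} divides C(aτ+a-1, a) · C(bτ+b, b). -/
/-!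
By Kummer's theorem, the `p`-adic valuation of the product is the number of carries in the two
additions `a + (aτ - 1)` and `b + bτ` in base `p` (for `τ ≥ 1`; `τ ≤ -2` reduces to this case
with `a` and `b` exchanged, and for `τ ∈ {0, -1}` a factor vanishes). For each `i` with
`β < i ≤ α`, `p^i` divides `a + b` but neither `a` nor `b`, which forces a carry into the `i`-th
digit in one of the two additions. This gives at least `α - β` carries.
-/

open Finset

lemma ichoose_natCast (n k : ℕ) : ichoose n k = n.choose k := by
  simp [ichoose]

lemma ichoose_neg_natCast_sub_one (n k : ℕ) :
    ichoose (-n - 1) k = (-1) ^ k * (n + k).choose k := by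
  rw [ichoose, if_neg (by omega),
    show -(-(n : ℤ) - 1) + k - 1 = ((n + k : ℕ) : ℤ) by push_cast; ring, Int.toNat_natCast]

lemma carry_or_carry_of_dvd_add {P a b t : ℕ} (ht : t ≠ 0) (hab : P ∣ a + b) (ha : ¬ P ∣ a) :
    P ≤ a % P + (a * t - 1) % P ∨ P ≤ b % P + b * t % P := by
  have ha0 : a ≠ 0 := by rintro rfl; simp at ha
  have hP0 : 0 < P := Nat.pos_of_ne_zero (by rintro rfl; exact ha (by simp_all))
  have hP1 : 1 % P = 1 := Nat.one_mod_eq_one.mpr (by rintro rfl; simp at ha)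
  have hamod : a % P ≠ 0 := fun h => ha (Nat.dvd_of_mod_eq_zero h)
  have hat : a * t ≠ 0 := mul_ne_zero ha0 ht
  have hAB : P ∣ (a * t + a) + (b * t + b) := by
    rw [show (a * t + a) + (b * t + b) = (a + b) * (t + 1) by ring]
    exact hab.mul_right _
  /- With `x = a % P` and `y = b % P` we have `x + y = P`. If `b + bt` does not carry, then
  `(bt + b) % P ≥ y > 0`, so `(at + a) % P = P - (bt + b) % P` lies in `[1, x]`, and hence
  `(at + a - 1) % P < x`: adding `a` to `at - 1` carries. -/
  have e1 := Nat.add_mod_add_ite a b P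
  have e2 := Nat.add_mod_add_ite (a * t + a) (b * t + b) P
  have e3 := Nat.add_mod_add_ite b (b * t) P
  have e4 := Nat.add_mod_add_ite a (a * t - 1) P
  have e5 := Nat.add_mod_add_ite (a * t - 1 + a) 1 P
  rw [Nat.mod_eq_zero_of_dvd hab] at e1
  rw [Nat.mod_eq_zero_of_dvd hAB] at e2
  rw [add_comm b] at e3
  rw [add_comm a] at e4
  rw [show a * t - 1 + a + 1 = a * t + a by omega, hP1] at e5
  have := Nat.mod_lt a hP0
  have := Nat.mod_lt b hP0
  have := Nat.mod_lt (a * t + a) hP0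
  have := Nat.mod_lt (b * t + b) hP0
  split_ifs at e1 e2 e3 e4 e5 <;> omega

theorem Nat.Prime.pow_sub_dvd_choose_mul_choose {p a b t α β : ℕ} (hp : p.Prime) (ht : t ≠ 0)
    (hgcd : ¬ p ^ (β + 1) ∣ Nat.gcd a b) (hsum : p ^ α ∣ a + b) :
    p ^ (α - β) ∣ (a * t - 1 + a).choose a * (b * t + b).choose b := by
  set B := α + Nat.log p (a * t - 1 + a) + Nat.log p (b * t + b) + 1
  rw [pow_dvd_iff_le_emultiplicity, _root_.emultiplicity_mul hp.prime,
    hp.emultiplicity_choose' (b := B) (by omega), hp.emultiplicity_choose' (b := B) (by omega),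
    ← Nat.cast_add, Nat.cast_le]
  have hcarry : Ico (β + 1) (α + 1) ⊆
      {i ∈ Ico 1 B | p ^ i ≤ a % p ^ i + (a * t - 1) % p ^ i} ∪
        {i ∈ Ico 1 B | p ^ i ≤ b % p ^ i + b * t % p ^ i} := by
    intro i hi
    rw [mem_Ico] at hi
    have hab : p ^ i ∣ a + b := (pow_dvd_pow p (by omega)).trans hsum
    have ha : ¬ p ^ i ∣ a := fun ha =>
      hgcd ((pow_dvd_pow p hi.1).trans (Nat.dvd_gcd ha ((Nat.dvd_add_right ha).mp hab)))
    have hiB : i ∈ Ico 1 B := mem_Ico.mpr ⟨by omega, by omega⟩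
    simpa [mem_union, mem_filter, hiB] using carry_or_carry_of_dvd_add ht hab ha
  calc α - β = #(Ico (β + 1) (α + 1)) := by simp
    _ ≤ _ := card_le_card hcarry
    _ ≤ _ := card_union_le _ _

theorem stmt7_general (p : ℕ) (hp : p.Prime) (τ : ℤ) (a b : ℕ) (ha : 1 ≤ a) (hb : 1 ≤ b)
    (α β : ℕ)
    (h2 : ¬ p ^ (β + 1) ∣ Nat.gcd a b)
    (h3 : p ^ α ∣ a + b) :
    ((p : ℤ) ^ (α - β)) ∣
      ichoose ((a : ℤ) * τ + a - 1) a * ichoose ((b : ℤ) * τ + b) b := by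
  obtain hτ | rfl | rfl | hτ : 1 ≤ τ ∨ τ = 0 ∨ τ = -1 ∨ τ ≤ -2 := by omega
  · lift τ to ℕ using by omega
    have hat : 1 ≤ a * τ := Nat.one_le_iff_ne_zero.mpr (mul_ne_zero (by omega) (by omega))
    rw [show (a : ℤ) * τ + a - 1 = ((a * τ - 1 + a : ℕ) : ℤ) by push_cast [Nat.cast_sub hat]; ring,
      show (b : ℤ) * τ + b = ((b * τ + b : ℕ) : ℤ) by push_cast; ring,
      ichoose_natCast, ichoose_natCast]
    exact_mod_cast hp.pow_sub_dvd_choose_mul_choose (by omega) h2 h3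
  · rw [show (a : ℤ) * 0 + a - 1 = ((a - 1 : ℕ) : ℤ) by omega, ichoose_natCast,
      Nat.choose_eq_zero_of_lt (by omega)]
    simp
  · rw [show (b : ℤ) * (-1) + b = ((0 : ℕ) : ℤ) by ring, ichoose_natCast,
      Nat.choose_eq_zero_of_lt (by omega)]
    simp
  · obtain ⟨t, rfl⟩ : ∃ t : ℕ, τ = -t - 1 := ⟨(-τ - 1).toNat, by omega⟩
    have hbt : 1 ≤ b * t := Nat.one_le_iff_ne_zero.mpr (mul_ne_zero (by omega) (by omega))
    rw [show (a : ℤ) * (-t - 1) + a - 1 = -((a * t : ℕ) : ℤ) - 1 by push_cast; ring,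
      show (b : ℤ) * (-t - 1) + b = -((b * t - 1 : ℕ) : ℤ) - 1 by
        push_cast [Nat.cast_sub hbt]; ring,
      ichoose_neg_natCast_sub_one, ichoose_neg_natCast_sub_one, mul_mul_mul_comm]
    have key := hp.pow_sub_dvd_choose_mul_choose (a := b) (b := a) (t := t) (by omega)
      (by rwa [Nat.gcd_comm]) (by rwa [add_comm])
    rw [mul_comm] at key
    exact Dvd.dvd.mul_left (by exact_mod_cast key) _

theorem stmt7 (p : ℕ) (hp : p.Prime) (τ : ℤ) (a b : ℕ) (ha : 1 ≤ a) (hb : 1 ≤ b)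
    (α β : ℕ) (hβ : β ≤ α)
    (h1 : p ^ β ∣ Nat.gcd a b) (h2 : ¬ p ^ (β + 1) ∣ Nat.gcd a b)
    (h3 : p ^ α ∣ a + b) :
    ((p : ℤ) ^ (α - β)) ∣
      ichoose ((a : ℤ) * τ + a - 1) a * ichoose ((b : ℤ) * τ + b) b :=
  stmt7_general p hp τ a b ha hb α β h2 h3
end

section
/- For the functional equation Y = X(1-Y)^τ(1-a(1-Y)) with Y(0)=0, the solution satisfies 1 - Y(X) = 1 + Σ_{n≥1} (X^n/n) Σ_{i≥0} (-1)^{n+i} C(n,i) C(nτ+i, n-1) a^i. -/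
open PowerSeries

/-!
Write the equation as `Y = X · Φ(Y)` with `Φ(w) = (1 - w)^τ (1 - a(1 - w))`. Over `ℚ(a)` the
series `Φ` is invertible (its constant term is `1 - a`), so Lagrange inversion applies:
`n [Xⁿ] Y = [wⁿ⁻¹] Φⁿ`, and `Φⁿ = ∑ᵢ C(n,i) (-a)ⁱ (1 - w)^(nτ + i)` has extended binomial
coefficients.

Lagrange inversion is proved by a residue computation: for `Y = X A` with `A` a unit,
`[Xᵏ] Y' A^-(k+1) Yⁱ = δᵢₖ`, since for `m ≥ 1` the series
`m Y' A^-(m+1) = m A^-m - X (A^-m)'` has vanishing `Xᵐ` coefficient.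
-/

lemma ichoose_eq_choose (n : ℤ) (k : ℕ) : ichoose n k = Ring.choose n k := by
  unfold ichoose
  split_ifs with hn
  · rw [← Ring.choose_natCast, Int.toNat_of_nonneg hn]
  · rw [← neg_neg n, Ring.choose_neg, ← Ring.choose_natCast, Int.toNat_of_nonneg (by omega),
      Units.smul_def, Int.coe_negOnePow_natCast, smul_eq_mul, neg_neg]

namespace PowerSeries

section OneSubX

variable (R : Type*) [CommRing R]

noncomputable def oneSubXUnit : R⟦X⟧ˣ :=
  Units.mkOfMulEqOne (1 - X) (mk 1) (Eq.trans (mul_comm _ _) (mk_one_mul_one_sub_eq_one R))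

@[simp]
lemma val_oneSubXUnit : (oneSubXUnit R : R⟦X⟧) = 1 - X := rfl

lemma rescale_neg_one_oneSubXUnit_zpow (M : ℤ) :
    rescale (-1 : R) ↑(oneSubXUnit R ^ M) = binomialSeries R M := by
  cases M with
  | ofNat d =>
    simp [Units.val_pow_eq_pow_val, sub_eq_add_neg]
  | negSucc d =>
    rw [zpow_negSucc, ← inv_pow, oneSubXUnit, ← invOneSubPow_eq_inv_one_sub_pow,
      rescale_neg_one_invOneSubPow, Int.negSucc_eq]
    push_cast
    ring_nf

lemma coeff_oneSubXUnit_zpow (M : ℤ) (k : ℕ) :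
    coeff k ↑(oneSubXUnit R ^ M) = (-1) ^ k * ((Ring.choose M k : ℤ) : R) := by
  have h := congrArg (coeff k) (rescale_neg_one_oneSubXUnit_zpow R M)
  rw [coeff_rescale, binomialSeries_coeff, zsmul_one] at h
  rw [← h, ← mul_assoc, ← mul_pow, neg_one_mul, neg_neg, one_pow, one_mul]

end OneSubX

section Lagrange

variable {R : Type*} [CommRing R]

lemma coeff_X_mul_derivative (f : R⟦X⟧) (n : ℕ) :
    coeff n (X * d⁄dX R f) = n * coeff n f := by
  cases n with
  | zero => simp
  | succ n => rw [coeff_succ_X_mul, coeff_derivative, mul_comm, Nat.cast_succ]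

lemma derivative_X_mul_mul_inv_pow (A : R⟦X⟧ˣ) (m : ℕ) :
    (m : R⟦X⟧) * (d⁄dX R (X * (A : R⟦X⟧)) * (↑A⁻¹ : R⟦X⟧) ^ (m + 1)) =
      (m : R⟦X⟧) * (↑A⁻¹ : R⟦X⟧) ^ m - X * d⁄dX R ((↑A⁻¹ : R⟦X⟧) ^ m) := by
  cases m with
  | zero => simp
  | succ m =>
    rw [derivative_pow, derivative_inv, Derivation.leibniz, derivative_X, Nat.add_sub_cancel]
    linear_combination (↑(m + 1) * (↑A⁻¹ : R⟦X⟧) ^ (m + 1) : R⟦X⟧) * A.mul_inv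

variable [IsAddTorsionFree R]

lemma coeff_derivative_X_mul_mul_inv_pow (A : R⟦X⟧ˣ) (m : ℕ) :
    coeff m (d⁄dX R (X * (A : R⟦X⟧)) * (↑A⁻¹ : R⟦X⟧) ^ (m + 1)) = if m = 0 then 1 else 0 := by
  split_ifs with hm
  · subst hm
    rw [pow_one, coeff_zero_eq_constantCoeff_apply, map_mul, ← coeff_zero_eq_constantCoeff_apply,
      coeff_derivative, coeff_succ_X_mul, coeff_zero_eq_constantCoeff_apply, Nat.cast_zero,
      zero_add, mul_one, ← map_mul, A.mul_inv, map_one]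
  · have h := congrArg (coeff m) (derivative_X_mul_mul_inv_pow A m)
    rw [map_sub, coeff_X_mul_derivative, ← map_natCast (C (R := R)) m, coeff_C_mul, coeff_C_mul,
      sub_self, ← nsmul_eq_mul] at h
    exact (smul_eq_zero.mp h).resolve_left hm

lemma coeff_derivative_X_mul_mul_inv_pow_mul_pow (A : R⟦X⟧ˣ) (k i : ℕ) :
    coeff k (d⁄dX R (X * (A : R⟦X⟧)) * (↑A⁻¹ : R⟦X⟧) ^ (k + 1) * (X * (A : R⟦X⟧)) ^ i) =
      if i = k then 1 else 0 := by
  rw [mul_pow, mul_left_comm, mul_assoc, coeff_X_pow_mul']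
  rcases le_or_gt i k with hik | hik
  · obtain ⟨m, rfl⟩ := Nat.exists_eq_add_of_le hik
    have hA : (↑A⁻¹ : R⟦X⟧) ^ (i + m + 1) * (A : R⟦X⟧) ^ i = (↑A⁻¹ : R⟦X⟧) ^ (m + 1) := by
      rw [add_assoc, pow_add, mul_right_comm, ← mul_pow, A.inv_mul, one_pow, one_mul]
    rw [if_pos hik, hA, Nat.add_sub_cancel_left, coeff_derivative_X_mul_mul_inv_pow]
    simp
  · rw [if_neg hik.not_ge, if_neg hik.ne']

lemma coeff_derivative_X_mul_mul_inv_pow_mul_subst (A : R⟦X⟧ˣ) (G : R⟦X⟧) (k : ℕ) :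
    coeff k (d⁄dX R (X * (A : R⟦X⟧)) * (↑A⁻¹ : R⟦X⟧) ^ (k + 1) * G.subst (X * (A : R⟦X⟧))) =
      coeff k G := by
  have hXA : HasSubst (X * (A : R⟦X⟧)) := HasSubst.of_constantCoeff_zero' (by simp)
  have htail (H : R⟦X⟧) : coeff k (d⁄dX R (X * (A : R⟦X⟧)) * (↑A⁻¹ : R⟦X⟧) ^ (k + 1) *
      ((X * (A : R⟦X⟧)) ^ (k + 1) * H)) = 0 := by
    rw [mul_pow, mul_assoc (X ^ _), mul_left_comm, coeff_X_pow_mul', if_neg (by omega)]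
  conv_lhs => rw [eq_X_pow_mul_shift_add_trunc (k + 1) G, subst_add hXA, subst_mul hXA,
    subst_pow hXA, subst_X hXA, subst_coe hXA, mul_add, map_add, htail, zero_add,
    Polynomial.aeval_eq_sum_range' (natDegree_trunc_lt G k), Finset.mul_sum, map_sum]
  simp only [mul_smul_comm, map_smul, coeff_derivative_X_mul_mul_inv_pow_mul_pow, smul_eq_mul,
    mul_ite, mul_one, mul_zero, Finset.sum_ite_eq', Finset.mem_range, coeff_trunc]
  simp

theorem coeff_succ_mul_eq_coeff_pow_of_eq_X_mul_subst (Φ : R⟦X⟧ˣ) {Y : R⟦X⟧}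
    (hY : Y = X * (Φ : R⟦X⟧).subst Y) (k : ℕ) :
    coeff (k + 1) Y * (k + 1) = coeff k ((Φ : R⟦X⟧) ^ (k + 1)) := by
  have hsubst : HasSubst Y := HasSubst.of_constantCoeff_zero' (by rw [hY]; simp)
  set A : R⟦X⟧ˣ := Units.map (substAlgHom (R := R) hsubst).toMonoidHom Φ
  have hA : (A : R⟦X⟧) = (Φ : R⟦X⟧).subst Y := by
    simp [A, coe_substAlgHom]
  have hYA : Y = X * (A : R⟦X⟧) := hA ▸ hY
  rw [← coeff_derivative, ← coeff_derivative_X_mul_mul_inv_pow_mul_subst A (_ ^ _), ← hYA,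
    subst_pow hsubst, ← hA, mul_assoc, ← mul_pow, A.inv_mul, one_pow, mul_one]

end Lagrange

section FunctionalEquation

variable {R : Type*} [CommRing R]

lemma coeff_oneSubXUnit_zpow_mul_pow (τ : ℤ) (a : R) (n k : ℕ) :
    coeff k ((((oneSubXUnit R ^ τ : R⟦X⟧ˣ) : R⟦X⟧) * (1 - C a * (oneSubXUnit R : R⟦X⟧))) ^ n) =
      ∑ i ∈ Finset.range (n + 1),
        n.choose i * (-a) ^ i * ((-1) ^ k * ((Ring.choose ((n : ℤ) * τ + i) k : ℤ) : R)) := by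
  have hexpand : (↑(oneSubXUnit R ^ τ) * (1 - C a * (oneSubXUnit R : R⟦X⟧))) ^ n =
      ∑ i ∈ Finset.range (n + 1),
        C (n.choose i * (-a) ^ i) * ↑(oneSubXUnit R ^ ((n : ℤ) * τ + i)) := by
    rw [mul_pow, sub_eq_add_neg, add_comm, add_pow, Finset.mul_sum]
    refine Finset.sum_congr rfl fun i _ => ?_
    rw [zpow_add, mul_comm (n : ℤ), zpow_mul, zpow_natCast, zpow_natCast, Units.val_mul,
      Units.val_pow_eq_pow_val, Units.val_pow_eq_pow_val]
    rw [← neg_mul, ← map_neg, mul_pow, ← map_pow, one_pow, mul_one, map_mul, map_natCast]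
    ring
  simp only [hexpand, map_sum, coeff_C_mul, coeff_oneSubXUnit_zpow]

variable [IsAddTorsionFree R]

theorem coeff_succ_mul_of_functional_equation (τ : ℤ) {a : R} (ha : IsUnit (1 - a)) {Y : R⟦X⟧}
    (hY0 : constantCoeff Y = 0)
    (hY : Y * (1 - Y) ^ (-τ).toNat = X * (1 - Y) ^ τ.toNat * (1 - C a * (1 - Y))) (k : ℕ) :
    coeff (k + 1) Y * (k + 1) =
      ∑ i ∈ Finset.range (k + 2), (k + 1).choose i * (-a) ^ i *
        ((-1) ^ k * ((Ring.choose (((k + 1 : ℕ) : ℤ) * τ + i) k : ℤ) : R)) := by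
  set W := oneSubXUnit R
  have hsubst : HasSubst Y := HasSubst.of_constantCoeff_zero' hY0
  obtain ⟨U, hU⟩ : IsUnit (1 - C a * (W : R⟦X⟧)) := by
    rw [isUnit_iff_constantCoeff]
    simpa [W] using ha
  set V : R⟦X⟧ˣ := Units.map (substAlgHom (R := R) hsubst).toMonoidHom W
  have hV : (V : R⟦X⟧) = 1 - Y := by
    change substAlgHom hsubst (1 - X) = 1 - Y
    rw [map_sub, map_one, substAlgHom_X]
  have hΦ : ((W ^ τ * U : R⟦X⟧ˣ) : R⟦X⟧).subst Y = ↑(V ^ τ) * (1 - C a * (1 - Y)) := by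
    rw [← coe_substAlgHom hsubst, Units.val_mul, map_mul, hU, map_sub, map_one, map_mul, ← hV,
      ← algebraMap_eq, AlgHom.commutes, ← map_zpow]
    rfl
  have hτ : (↑(V ^ τ) : R⟦X⟧) * (1 - Y) ^ (-τ).toNat = (1 - Y) ^ τ.toNat := by
    rw [← hV, ← Units.val_pow_eq_pow_val, ← Units.val_pow_eq_pow_val, ← Units.val_mul,
      ← zpow_natCast, ← zpow_natCast, ← zpow_add]
    congr 2
    omega
  have hYΦ : Y = X * ((W ^ τ * U : R⟦X⟧ˣ) : R⟦X⟧).subst Y := by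
    refine (Units.mul_left_inj (V ^ (-τ).toNat)).mp ?_
    rw [hΦ, Units.val_pow_eq_pow_val, hV, hY]
    linear_combination (-(X * (1 - C a * (1 - Y)))) * hτ
  rw [coeff_succ_mul_eq_coeff_pow_of_eq_X_mul_subst _ hYΦ, Units.val_mul, hU,
    coeff_oneSubXUnit_zpow_mul_pow]

end FunctionalEquation

end PowerSeries

/-- For the solution `Y(X)` (with `Y(0)=0`, coefficients in `ℚ[a]`) of
`Y = X (1-Y)^τ (1 - a(1-Y))` (stated with denominators cleared so as to make
sense for any integer `τ`), one has
`1 - Y(X) = 1 + Σ_{n≥1} (X^n/n) Σ_{i≥0} (-1)^{n+i} C(n,i) C(nτ+i,n-1) a^i`. -/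
theorem stmt12 (τ : ℤ) (Y : PowerSeries (Polynomial ℚ))
    (hY0 : PowerSeries.constantCoeff Y = 0)
    (hY : Y * (1 - Y) ^ ((-τ).toNat) =
      PowerSeries.X * (1 - Y) ^ (τ.toNat) *
        (1 - PowerSeries.C Polynomial.X * (1 - Y))) :
    1 - Y =
      PowerSeries.mk (fun n => if n = 0 then 1 else
        ∑ i ∈ Finset.range (n + 1),
          Polynomial.C (((-1 : ℚ) ^ (n + i) * (ichoose (n : ℤ) i : ℚ) *
              (ichoose ((n : ℤ) * τ + i) (n - 1) : ℚ)) / n) *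
            Polynomial.X ^ i) := by
  set ι := algebraMap (Polynomial ℚ) (RatFunc ℚ)
  have hι : Function.Injective ι := IsFractionRing.injective _ _
  refine map_injective ι hι ?_
  have ha : IsUnit (1 - ι Polynomial.X) := by
    rw [isUnit_iff_ne_zero, sub_ne_zero, ← map_one ι, hι.ne_iff, ← Polynomial.C_1]
    exact (Polynomial.X_ne_C 1).symm
  have hZ0 : constantCoeff (map ι Y) = 0 := by
    rw [← coeff_zero_eq_constantCoeff_apply, coeff_map, coeff_zero_eq_constantCoeff_apply, hY0,
      map_zero]
  have hcoeff := coeff_succ_mul_of_functional_equation τ ha hZ0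
    (by simpa using congrArg (map ι) hY)
  ext (_ | k)
  · simp [hZ0]
  · have hk : (k + 1 : RatFunc ℚ) ≠ 0 := Nat.cast_add_one_ne_zero k
    rw [map_sub, map_one, coeff_map, coeff_mk, if_neg k.succ_ne_zero, map_sum, map_sub, coeff_one,
      if_neg k.succ_ne_zero, zero_sub]
    refine mul_right_cancel₀ hk ?_
    rw [neg_mul, hcoeff k, Finset.sum_mul, ← Finset.sum_neg_distrib]
    refine Finset.sum_congr rfl fun i _ => ?_
    have hC (q : ℚ) : ι (Polynomial.C q) = q := map_ratCast (ι.comp Polynomial.C) q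
    simp only [map_mul, map_pow, hC, ichoose_eq_choose, Ring.choose_natCast, Nat.add_sub_cancel]
    push_cast
    field_simp
    ring
end

section
/- Let a, b ≥ 1 and m₁ ≥ 1 be integers, and write x = (q^{m₁/2} + q^{-m₁/2})/2, z_{m₁} = q^{m₁/2} - q^{-m₁/2}. Then in the ring ℚ[q^{1/2}, q^{-1/2}], the quantum integer ratio {a b m₁}/{b m₁} := (q^{abm₁/2} - q^{-abm₁/2})/(q^{bm₁/2} - q^{-bm₁/2}) is congruent to a·x^{(a-1)b} modulo z_{m₁}². -/
/-!
Write `u = q^{m₁/2}`, `w = u⁻¹` and `x = (u + w)/2`. Modulo `(u - w)²` we have `x² ≡ 1`, and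
`u ≡ x (1 + δ)`, `w ≡ x (1 - δ)` with `δ = x (u - w)/2`, so `δ² ≡ 0`. Hence
`u^{bi} w^{b(a-1-i)} ≡ x^{(a-1)b} (1 + b (i - (a-1-i)) δ)`, and in the geometric sum
`∑_{i<a} u^{bi} w^{b(a-1-i)}` the first-order terms cancel under `i ↦ a - 1 - i`, leaving
`a x^{(a-1)b}`. Since `ℚ[q^{±1/2}]` is a domain, the ratio `r` is exactly this geometric sum.
-/

open LaurentPolynomial

section DualNumbers

variable {S : Type*} [CommRing S] {δ : S}

lemma one_add_pow_of_sq_eq_zero (hδ : δ ^ 2 = 0) (n : ℕ) : (1 + δ) ^ n = 1 + n * δ := by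
  induction n with
  | zero => simp
  | succ n ih => rw [pow_succ, ih]; push_cast; linear_combination n * hδ

lemma mul_one_add_pow_of_sq_eq_zero (hδ : δ ^ 2 = 0) (x : S) (n : ℕ) :
    (x * (1 + δ)) ^ n = x ^ n * (1 + n * δ) := by
  rw [mul_pow, one_add_pow_of_sq_eq_zero hδ]

lemma mul_one_sub_pow_of_sq_eq_zero (hδ : δ ^ 2 = 0) (x : S) (n : ℕ) :
    (x * (1 - δ)) ^ n = x ^ n * (1 - n * δ) := by
  have hδ' : (-δ) ^ 2 = 0 := by rw [neg_sq, hδ]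
  simpa [← sub_eq_add_neg] using mul_one_add_pow_of_sq_eq_zero hδ' x n

lemma geom_sum₂_mul_one_add_mul_one_sub_of_sq_eq_zero (hδ : δ ^ 2 = 0) (x : S) (n : ℕ) :
    ∑ i ∈ Finset.range n, (x * (1 + δ)) ^ i * (x * (1 - δ)) ^ (n - 1 - i) =
      n * x ^ (n - 1) := by
  have hterm : ∀ i ∈ Finset.range n, (x * (1 + δ)) ^ i * (x * (1 - δ)) ^ (n - 1 - i) =
      x ^ (n - 1) * (1 + (i * δ - ((n - 1 - i : ℕ) : S) * δ)) := by
    intro i hi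
    rw [mul_one_add_pow_of_sq_eq_zero hδ, mul_one_sub_pow_of_sq_eq_zero hδ, mul_mul_mul_comm,
      ← pow_add, Nat.add_sub_cancel' (Nat.le_sub_one_of_lt (Finset.mem_range.1 hi))]
    linear_combination (-(i : S) * (n - 1 - i : ℕ) * x ^ (n - 1)) * hδ
  have hcancel : ∑ i ∈ Finset.range n, ((i : S) * δ - ((n - 1 - i : ℕ) : S) * δ) = 0 := by
    rw [Finset.sum_sub_distrib, sub_eq_zero,
      ← Finset.sum_range_reflect (fun i : ℕ => ((n - 1 - i : ℕ) : S) * δ)]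
    refine Finset.sum_congr rfl fun i hi => ?_
    rw [Nat.sub_sub_self (Nat.le_sub_one_of_lt (Finset.mem_range.1 hi))]
  rw [Finset.sum_congr rfl hterm, ← Finset.mul_sum, Finset.sum_add_distrib, hcancel,
    Finset.sum_const, Finset.card_range, nsmul_one]
  ring

lemma exists_sq_eq_zero_of_sub_sq_eq_zero {u w c : S} (huw : u * w = 1) (hc : 2 * c = 1)
    (hz : (u - w) ^ 2 = 0) :
    ∃ δ : S, δ ^ 2 = 0 ∧ u = c * (u + w) * (1 + δ) ∧ w = c * (u + w) * (1 - δ) := by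
  refine ⟨c ^ 2 * (u + w) * (u - w), ?_, ?_, ?_⟩
  · linear_combination c ^ 4 * (u + w) ^ 2 * hz
  · linear_combination -(u + c * (u - w) * (2 * c + 1)) * hc - c ^ 3 * (u - w) * hz
      - 4 * c ^ 3 * (u - w) * huw
  · linear_combination (-w + c * (u - w) * (2 * c + 1)) * hc + c ^ 3 * (u - w) * hz
      + 4 * c ^ 3 * (u - w) * huw

end DualNumbers

lemma sub_sq_dvd_geom_sum₂_pow_sub {R : Type*} [CommRing R] {u w c : R} (huw : u * w = 1)
    (hc : 2 * c = 1) (a b : ℕ) :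
    (u - w) ^ 2 ∣ ∑ i ∈ Finset.range a, (u ^ b) ^ i * (w ^ b) ^ (a - 1 - i) -
      a * (c * (u + w)) ^ ((a - 1) * b) := by
  set π := Ideal.Quotient.mk (Ideal.span {(u - w) ^ 2})
  rw [← Ideal.mem_span_singleton, ← Ideal.Quotient.eq_zero_iff_mem, map_sub, sub_eq_zero]
  obtain ⟨δ, hδ, hu, hw⟩ := exists_sq_eq_zero_of_sub_sq_eq_zero (u := π u) (w := π w)
    (c := π c) (by rw [← map_mul, huw, map_one]) (by rw [← map_ofNat π, ← map_mul, hc, map_one])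
    (by rw [← map_sub, ← map_pow, Ideal.Quotient.eq_zero_iff_mem]
        exact Ideal.mem_span_singleton_self _)
  simp only [map_sum, map_mul, map_pow, map_natCast, map_add]
  set x := π c * (π u + π w)
  have hbδ : ((b : _) * δ) ^ 2 = 0 := by rw [mul_pow, hδ, mul_zero]
  rw [hu, hw, mul_one_add_pow_of_sq_eq_zero hδ, mul_one_sub_pow_of_sq_eq_zero hδ,
    geom_sum₂_mul_one_add_mul_one_sub_of_sq_eq_zero hbδ, ← pow_mul, mul_comm b]

lemma LaurentPolynomial.T_injective {R : Type*} [Semiring R] [Nontrivial R] :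
    Function.Injective (T : ℤ → R[T;T⁻¹]) := fun m n h => by
  simpa using congrArg (fun f : R[T;T⁻¹] => f.coeff n) h

theorem stmt13_general (a b m₁ : ℕ) (hb : 1 ≤ b) (hm : 1 ≤ m₁)
    (r : LaurentPolynomial ℚ)
    (hr : r * (T ((b * m₁ : ℕ) : ℤ) - T (-((b * m₁ : ℕ) : ℤ))) =
      T ((a * b * m₁ : ℕ) : ℤ) - T (-((a * b * m₁ : ℕ) : ℤ))) :
    (T ((m₁ : ℕ) : ℤ) - T (-((m₁ : ℕ) : ℤ))) ^ 2 ∣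
      r - (a : LaurentPolynomial ℚ) *
        (LaurentPolynomial.C (1 / 2 : ℚ) *
          (T ((m₁ : ℕ) : ℤ) + T (-((m₁ : ℕ) : ℤ)))) ^ ((a - 1) * b) := by
  set u : LaurentPolynomial ℚ := T ((m₁ : ℕ) : ℤ)
  set w : LaurentPolynomial ℚ := T (-((m₁ : ℕ) : ℤ))
  have hpow : ∀ k : ℕ, T ((k * m₁ : ℕ) : ℤ) = u ^ k ∧ T (-((k * m₁ : ℕ) : ℤ)) = w ^ k :=
    fun k => ⟨by rw [T_pow]; push_cast; rfl, by rw [T_pow]; push_cast; ring_nf⟩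
  have hne : u ^ b ≠ w ^ b := by
    rw [← (hpow b).1, ← (hpow b).2]
    exact T_injective.ne (by have := Nat.mul_pos hb hm; omega)
  rw [(hpow b).1, (hpow b).2, (hpow (a * b)).1, (hpow (a * b)).2, pow_mul', pow_mul'] at hr
  have hr_eq : r = ∑ i ∈ Finset.range a, (u ^ b) ^ i * (w ^ b) ^ (a - 1 - i) :=
    mul_right_cancel₀ (sub_ne_zero.2 hne) (hr.trans (geom_sum₂_mul _ _ a).symm)
  have huw : u * w = 1 := by rw [← T_add, add_neg_cancel, T_zero]
  have hc : 2 * C (1 / 2 : ℚ) = 1 := by rw [← map_ofNat C, ← map_mul]; norm_num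
  rw [hr_eq]
  exact sub_sq_dvd_geom_sum₂_pow_sub huw hc a b

/-- In `ℚ[q^{±1/2}]` (Laurent polynomials, where `T 1` represents `q^{1/2}`),
the quantum-integer ratio `{a b m₁}/{b m₁}`, i.e. the unique `r` with
`r · {b m₁} = {a b m₁}`, is congruent to `a · x^{(a-1)b}` modulo `z_{m₁}²`,
where `x = (q^{m₁/2} + q^{-m₁/2})/2` and `z_{m₁} = q^{m₁/2} - q^{-m₁/2}`. -/
theorem stmt13 (a b m₁ : ℕ) (ha : 1 ≤ a) (hb : 1 ≤ b) (hm : 1 ≤ m₁)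
    (r : LaurentPolynomial ℚ)
    (hr : r * (T ((b * m₁ : ℕ) : ℤ) - T (-((b * m₁ : ℕ) : ℤ))) =
      T ((a * b * m₁ : ℕ) : ℤ) - T (-((a * b * m₁ : ℕ) : ℤ))) :
    (T ((m₁ : ℕ) : ℤ) - T (-((m₁ : ℕ) : ℤ))) ^ 2 ∣
      r - (a : LaurentPolynomial ℚ) *
        (LaurentPolynomial.C (1 / 2 : ℚ) *
          (T ((m₁ : ℕ) : ℤ) + T (-((m₁ : ℕ) : ℤ)))) ^ ((a - 1) * b) :=
  stmt13_general a b m₁ hb hm r hr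
end

section
/- Let p be a prime, α ≥ 1, and m = p^α a with p ∤ a, and let k ≥ 1 be any integer. Then p^{2α} divides (-1)^{(k+1)m} C(km-1, m-1) - (-1)^{(k+1)m/p} C(km/p - 1, m/p - 1). -/
/-!
Write `m = p n` and `c = (k - 1) m`. By `(m - 1)! C(km - 1, m - 1) = ∏_{0<j<m} (c + j)`, the factors
with `p ∣ j` contribute exactly `p^(n-1) (n - 1)! C(kn - 1, n - 1)`, so `C(km - 1, m - 1)` is
`C(kn - 1, n - 1)` times the unit `∏_{0<j<m, p∤j} (c + j) / j`. Modulo `p^(2α)` this unit is a sign: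
pairing `j` with `m - j`, `(c + j)(c + m - j) = j (m - j) + c (c + m)` and `c (c + m) = k (k - 1) m²`
vanishes. The only unpaired `j` is `j = n` when `p = 2 ∤ n`; then `4 ≡ 0` and `c + n = (2k - 1) n`
contributes the sign `(-1)^(k-1)`.
-/

open Finset
open scoped Nat

def nonMultiples (p m : ℕ) : Finset ℕ := {j ∈ Ico 1 m | ¬ p ∣ j}

theorem mem_nonMultiples {p m j : ℕ} : j ∈ nonMultiples p m ↔ (1 ≤ j ∧ j < m) ∧ ¬ p ∣ j := by
  simp [nonMultiples]

theorem prod_Ico_add_eq_factorial_mul_choose (c : ℕ) {m : ℕ} (hm : 0 < m) :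
    ∏ j ∈ Ico 1 m, (c + j) = (m - 1)! * (c + m - 1).choose (m - 1) := by
  obtain ⟨r, rfl⟩ : ∃ r, m = r + 1 := ⟨m - 1, by omega⟩
  rw [prod_Ico_eq_prod_range, Nat.add_sub_cancel, ← add_assoc, Nat.add_sub_cancel,
    ← Nat.ascFactorial_eq_factorial_mul_choose, Nat.ascFactorial_eq_prod_range]
  simp only [add_assoc, add_comm 1]

theorem filter_dvd_Ico_mul_eq_image {p : ℕ} (hp : 0 < p) (n : ℕ) :
    {j ∈ Ico 1 (p * n) | p ∣ j} = (Ico 1 n).image (p * ·) := by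
  ext j
  simp only [mem_filter, mem_Ico, mem_image]
  constructor
  · rintro ⟨⟨h1, h2⟩, i, rfl⟩
    exact ⟨i, ⟨Nat.pos_of_ne_zero (by rintro rfl; simp at h1), Nat.lt_of_mul_lt_mul_left h2⟩, rfl⟩
  · rintro ⟨i, ⟨h1, h2⟩, rfl⟩
    exact ⟨⟨Nat.mul_pos hp h1, Nat.mul_lt_mul_of_pos_left h2 hp⟩, dvd_mul_right p i⟩

theorem prod_filter_dvd_Ico_mul {p : ℕ} (hp : 0 < p) (c n : ℕ) :
    ∏ j ∈ Ico 1 (p * n) with p ∣ j, (p * c + j) = p ^ (n - 1) * ∏ i ∈ Ico 1 n, (c + i) := by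
  rw [filter_dvd_Ico_mul_eq_image hp, prod_image fun _ _ _ _ h => Nat.eq_of_mul_eq_mul_left hp h]
  simp only [← mul_add, prod_mul_distrib, prod_const, Nat.card_Ico]

theorem factorial_mul_choose_eq_pow_mul_prod_nonMultiples {p n : ℕ} (hp : 0 < p) (hn : 0 < n)
    (c : ℕ) :
    (p * n - 1)! * (p * c + p * n - 1).choose (p * n - 1) =
      p ^ (n - 1) * ((n - 1)! * (c + n - 1).choose (n - 1)) *
        ∏ j ∈ nonMultiples p (p * n), (p * c + j) := by
  rw [← prod_Ico_add_eq_factorial_mul_choose _ (Nat.mul_pos hp hn),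
    ← prod_Ico_add_eq_factorial_mul_choose _ hn, ← prod_filter_dvd_Ico_mul hp,
    nonMultiples, prod_filter_mul_prod_filter_not]

theorem prod_nonMultiples_mul_choose {p : ℕ} (hp : 0 < p) (k n : ℕ) :
    (∏ j ∈ nonMultiples p (p * n), j) * (k * (p * n) + p * n - 1).choose (p * n - 1) =
      (k * n + n - 1).choose (n - 1) * ∏ j ∈ nonMultiples p (p * n), (k * (p * n) + j) := by
  rcases Nat.eq_zero_or_pos n with rfl | hn
  · simp [nonMultiples]
  have hfact := factorial_mul_choose_eq_pow_mul_prod_nonMultiples hp hn 0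
  have hshift := factorial_mul_choose_eq_pow_mul_prod_nonMultiples hp hn (k * n)
  simp only [mul_zero, zero_add, Nat.choose_self, mul_one] at hfact
  rw [hfact, show p * (k * n) = k * (p * n) by ring] at hshift
  have hpos : 0 < p ^ (n - 1) * (n - 1)! := by positivity
  apply Nat.eq_of_mul_eq_mul_left hpos
  linear_combination hshift

theorem sub_mem_nonMultiples {p m j : ℕ} (hpm : p ∣ m) (hj : j ∈ nonMultiples p m) :
    m - j ∈ nonMultiples p m := by
  rw [mem_nonMultiples] at hj ⊢
  refine ⟨by omega, fun hd => hj.2 ?_⟩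
  simpa [Nat.sub_sub_self hj.1.2.le] using Nat.dvd_sub hpm hd

theorem eq_of_mem_nonMultiples_of_sub_eq {p n j : ℕ} (hp : p.Prime)
    (hj : j ∈ nonMultiples p (p * n)) (hfix : p * n - j = j) : p = 2 ∧ j = n := by
  rw [mem_nonMultiples] at hj
  have h2j : p * n = 2 * j := by omega
  have hp2 : p = 2 := (Nat.prime_dvd_prime_iff_eq hp Nat.prime_two).mp <|
    (hp.dvd_mul.mp (h2j ▸ dvd_mul_right p n)).resolve_right hj.2
  subst hp2
  exact ⟨rfl, by omega⟩

theorem prod_add_eq_prod_of_involution {R : Type*} [CommRing R] {T : Finset ℕ} {m : ℕ} {c : R}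
    (hc : c * (c + m) = 0) (hle : ∀ j ∈ T, j ≤ m) (hmem : ∀ j ∈ T, m - j ∈ T)
    (hfix : ∀ j ∈ T, m - j ≠ j) (hunit : ∀ j ∈ T, IsUnit (j : R)) :
    ∏ j ∈ T, (c + j) = ∏ j ∈ T, (j : R) := by
  have hpair : ∀ j ∈ T, (c + j) * (c + (m - j : ℕ)) = j * (m - j : ℕ) := by
    intro j hj
    push_cast [Nat.cast_sub (hle j hj)]
    linear_combination hc
  have hratio : ∏ j ∈ T, (c + j) * Ring.inverse (j : R) = 1 := by
    refine prod_involution (fun j _ => m - j) (fun j hj => ?_) (fun j hj _ => hfix j hj) hmem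
      (fun j hj => Nat.sub_sub_self (hle j hj))
    rw [mul_mul_mul_comm, hpair j hj, mul_mul_mul_comm, Ring.mul_inverse_cancel _ (hunit j hj),
      Ring.mul_inverse_cancel _ (hunit _ (hmem j hj)), one_mul]
  calc ∏ j ∈ T, (c + j) = ∏ j ∈ T, ((c + j) * Ring.inverse (j : R)) * j :=
        prod_congr rfl fun j hj => by rw [mul_assoc, Ring.inverse_mul_cancel _ (hunit j hj), mul_one]
    _ = ∏ j ∈ T, (j : R) := by rw [prod_mul_distrib, hratio, one_mul]

theorem two_mul_add_one_eq_neg_one_pow {R : Type*} [CommRing R] (h4 : (4 : R) = 0) (k : ℕ) :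
    2 * (k : R) + 1 = (-1) ^ k := by
  rcases Nat.even_or_odd' k with ⟨t, rfl | rfl⟩
  · rw [pow_mul]; push_cast; linear_combination t * h4
  · rw [pow_succ, pow_mul]; push_cast; linear_combination (t + 1) * h4

theorem prod_nonMultiples_mul_add_eq {R : Type*} [CommRing R] {p n : ℕ} (hp : p.Prime)
    (hunit : ∀ j, ¬ p ∣ j → IsUnit (j : R)) (hsq : ((p : R) * n) ^ 2 = 0) (k : ℕ) :
    ∏ j ∈ nonMultiples p (p * n), ((k : R) * (p * n) + j) =
      ((-1) ^ (p * n + n)) ^ k * ∏ j ∈ nonMultiples p (p * n), (j : R) := by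
  set S := nonMultiples p (p * n)
  have hc : (k : R) * (p * n) * ((k : R) * (p * n) + ((p * n : ℕ) : R)) = 0 := by
    push_cast
    linear_combination (k * (k + 1) : R) * hsq
  have hle : ∀ j ∈ S, j ≤ p * n := fun j hj => (mem_nonMultiples.1 hj).1.2.le
  have hmem : ∀ j ∈ S, p * n - j ∈ S := fun j hj => sub_mem_nonMultiples (dvd_mul_right p n) hj
  have hunitS : ∀ j ∈ S, IsUnit (j : R) := fun j hj => hunit j (mem_nonMultiples.1 hj).2
  by_cases hfix : ∃ j ∈ S, p * n - j = j
  · obtain ⟨j, hj, hjj⟩ := hfix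
    obtain ⟨rfl, rfl⟩ := eq_of_mem_nonMultiples_of_sub_eq hp hj hjj
    have hodd : Odd j := Nat.odd_iff.mpr (Nat.two_dvd_ne_zero.mp (mem_nonMultiples.1 hj).2)
    have h4 : (4 : R) = 0 := by
      have : (4 : R) * (j : R) ^ 2 = 0 := by push_cast at hsq; linear_combination hsq
      exact ((hunitS j hj).pow 2).mul_left_eq_zero.mp this
    have hpair : ∏ i ∈ S.erase j, ((k : R) * ((2 : ℕ) * j) + i) = ∏ i ∈ S.erase j, (i : R) := by
      refine prod_add_eq_prod_of_involution hc (fun i hi => hle i (mem_of_mem_erase hi))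
        (fun i hi => mem_erase.2 ⟨?_, hmem i (mem_of_mem_erase hi)⟩)
        (fun i hi => ?_) (fun i hi => hunitS i (mem_of_mem_erase hi))
      all_goals have := ne_of_mem_erase hi; have := hle i (mem_of_mem_erase hi); omega
    have hsign : (k : R) * ((2 : ℕ) * j) + j = ((-1) ^ (2 * j + j)) ^ k * j := by
      rw [(by omega : 2 * j + j = 3 * j), (Nat.odd_mul.2 ⟨by decide, hodd⟩).neg_one_pow,
        ← two_mul_add_one_eq_neg_one_pow h4]
      push_cast
      ring
    rw [← mul_prod_erase S _ hj, ← mul_prod_erase S (fun i => (i : R)) hj, hpair, hsign, mul_assoc]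
  · push Not at hfix
    have heven : Even (p * n + n) := by
      rcases hp.eq_two_or_odd' with rfl | hpodd
      · by_contra hn
        rw [even_iff_two_dvd] at hn
        have hnS : n ∈ S := mem_nonMultiples.2 ⟨by omega, by omega⟩
        exact hfix n hnS (by omega)
      · rw [← add_one_mul]
        exact (hpodd.add_one).mul_right n
    rw [prod_add_eq_prod_of_involution hc hle hmem hfix hunitS, heven.neg_one_pow, one_pow, one_mul]

theorem cast_choose_mul_add_sub_one_eq {R : Type*} [CommRing R] {p n : ℕ} (hp : p.Prime)
    (hunit : ∀ j, ¬ p ∣ j → IsUnit (j : R)) (hsq : ((p : R) * n) ^ 2 = 0) (k : ℕ) :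
    ((k * (p * n) + p * n - 1).choose (p * n - 1) : R) =
      ((-1) ^ (p * n + n)) ^ k * (k * n + n - 1).choose (n - 1) := by
  have hcast := congrArg (Nat.cast : ℕ → R) (prod_nonMultiples_mul_choose hp.pos k n)
  push_cast at hcast
  have hprod : IsUnit (∏ j ∈ nonMultiples p (p * n), (j : R)) :=
    IsUnit.prod_iff.2 fun j hj => hunit j (mem_nonMultiples.1 hj).2
  apply hprod.mul_left_cancel
  rw [hcast, prod_nonMultiples_mul_add_eq hp hunit hsq]
  ring

theorem neg_one_pow_mul_pow_neg_one_pow_add {R : Type*} [CommRing R] (k m n : ℕ) :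
    (-1 : R) ^ ((k + 2) * m) * ((-1) ^ (m + n)) ^ k = (-1) ^ ((k + 2) * n) := by
  have hm : ((-1 : R) ^ m) ^ 2 = 1 := by rw [← pow_mul]; exact (even_two.mul_left _).neg_one_pow
  have hn : ((-1 : R) ^ n) ^ 2 = 1 := by rw [← pow_mul]; exact (even_two.mul_left _).neg_one_pow
  calc _ = (((-1 : R) ^ m) ^ 2) ^ (k + 1) * ((-1) ^ n) ^ k := by ring
    _ = ((-1) ^ n) ^ k * ((-1) ^ n) ^ 2 := by rw [hm, hn]; ring
    _ = _ := by ring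

theorem stmt16_general (p : ℕ) (hp : p.Prime) (α a : ℕ) (hα : 1 ≤ α)
    (k : ℕ) (hk : 1 ≤ k) (m : ℕ) (hm : m = p ^ α * a) :
    ((p : ℤ) ^ (2 * α)) ∣
      (-1 : ℤ) ^ ((k + 1) * m) * ((k * m - 1).choose (m - 1) : ℤ) -
        (-1 : ℤ) ^ ((k + 1) * (m / p)) * ((k * m / p - 1).choose (m / p - 1) : ℤ) := by
  obtain ⟨k, rfl⟩ : ∃ k', k = k' + 1 := ⟨k - 1, by omega⟩
  obtain ⟨n, rfl⟩ : ∃ n, m = p * n :=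
    ⟨p ^ (α - 1) * a, by rw [hm, ← mul_assoc, ← pow_succ', Nat.sub_add_cancel hα]⟩
  rw [Nat.mul_div_cancel_left _ hp.pos, Nat.mul_div_assoc _ (dvd_mul_right p n),
    Nat.mul_div_cancel_left _ hp.pos]
  have hsq : ((p : ZMod (p ^ (2 * α))) * n) ^ 2 = 0 := by
    rw [← Nat.cast_mul, hm, ← Nat.cast_pow, mul_pow, ← pow_mul, mul_comm α, Nat.cast_mul,
      ZMod.natCast_self, zero_mul]
  have hunit : ∀ j, ¬ p ∣ j → IsUnit (j : ZMod (p ^ (2 * α))) := fun j hj =>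
    (ZMod.isUnit_iff_coprime j _).2 (Nat.Coprime.pow_right _ (hp.coprime_iff_not_dvd.2 hj).symm)
  rw [show (p : ℤ) ^ (2 * α) = ((p ^ (2 * α) : ℕ) : ℤ) by push_cast; rfl,
    ← ZMod.intCast_zmod_eq_zero_iff_dvd]
  push_cast
  rw [add_one_mul k (p * n), add_one_mul k n, cast_choose_mul_add_sub_one_eq hp hunit hsq,
    ← mul_assoc, neg_one_pow_mul_pow_neg_one_pow_add, sub_self]

theorem stmt16 (p : ℕ) (hp : p.Prime) (α a : ℕ) (hα : 1 ≤ α) (ha : ¬ p ∣ a)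
    (k : ℕ) (hk : 1 ≤ k) (m : ℕ) (hm : m = p ^ α * a) :
    ((p : ℤ) ^ (2 * α)) ∣
      (-1 : ℤ) ^ ((k + 1) * m) * ((k * m - 1).choose (m - 1) : ℤ) -
        (-1 : ℤ) ^ ((k + 1) * (m / p)) * ((k * m / p - 1).choose (m / p - 1) : ℤ) :=
  stmt16_general p hp α a hα k hk m hm
end

section
/- For integers p ≥ 2 and every r ≥ 1, the numbers b⁻_{K_p,r} = -(1/r²) Σ_{d|r} μ(r/d) (-1)^{d+1} C(2d-1, d-1) and b⁺_{K_p,r} = (1/r²) Σ_{d|r} μ(r/d) (-1)^d C((2p+2)d - 1, d-1) are integers. -/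
/-!
Write `a_s(d) = (-1)^d C(sd-1, d-1)`; the two sums are `±∑_{d ∣ r} μ(r/d) a_s(d)` for the even
values `s = 2` and `s = 2p+2`. Such a Möbius sum is divisible by `r²` as soon as
`a_s(q^(k+1) e) ≡ a_s(q^k e) mod q^(2(k+1))` for all primes `q ∤ e`: for `r = q^(k+1) m` with
`q ∤ m`, only the divisors `d` with `q² ∤ d` contribute to `∑_{d ∣ r} μ(d) a_s(r/d)`, and they
combine to `∑_{e ∣ m} μ(e) (a_s(q^(k+1) m/e) - a_s(q^k m/e))`.

For the congruence put `m = q^k e`, `n = qm` and `c = (s-1) n`. Cancelling the multiples of `q` in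
`C(sn-1, n-1) (n-1)! = ∏_{0<i<n} (c+i)` gives `C(sn-1, n-1) U = C(sm-1, m-1) V`, where `U` and `V`
are the products of `i` and of `c+i` over the `0 < i < n` prime to `q`. Pairing `i` with `n-i`,
`(c+i)(c+n-i) = i(n-i) + c(c+n) ≡ i(n-i) mod q^(2(k+1))`, so `V ≡ U`, and `U` is a unit. The only
unpaired factor occurs for `q = 2`, `k = 0`, where `c + e ≡ -e mod 4` because `s` is even; the
resulting sign is exactly the one by which `(-1)^n` and `(-1)^m` differ.
-/

open Finset Nat ArithmeticFunction
open scoped ArithmeticFunction.Moebius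

theorem Finset.prod_eq_prod_of_involution {ι M : Type*} [CommMonoid M] [DecidableEq ι]
    {s : Finset ι} {f g : ι → M} (σ : ι → ι) (hσ_mem : ∀ a ∈ s, σ a ∈ s)
    (hσσ : ∀ a ∈ s, σ (σ a) = a) (hσ_ne : ∀ a ∈ s, σ a ≠ a)
    (hfg : ∀ a ∈ s, f a * f (σ a) = g a * g (σ a)) :
    ∏ a ∈ s, f a = ∏ a ∈ s, g a := by
  induction s using Finset.strongInduction with | H s ih => ?_
  obtain rfl | ⟨x, hx⟩ := s.eq_empty_or_nonempty
  · simp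
  have hpair : {x, σ x} ⊆ s := by simp [insert_subset_iff, hx, hσ_mem]
  rw [← prod_sdiff hpair, ← prod_sdiff hpair (f := g), prod_pair (hσ_ne x hx).symm,
    prod_pair (hσ_ne x hx).symm, hfg x hx]
  congr 1
  exact ih _ (sdiff_ssubset hpair (by simp)) (by grind) (by grind) (by grind) (by grind)

theorem Nat.Coprime.sum_divisors_mul_eq_sum_sum {M : Type*} [AddCommMonoid M] {m n : ℕ}
    (hmn : m.Coprime n) (f : ℕ → M) :
    ∑ d ∈ (m * n).divisors, f d = ∑ u ∈ m.divisors, ∑ v ∈ n.divisors, f (u * v) := by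
  rw [hmn.divisors_mul, sum_map, ← sum_product']
  exact sum_attach _ (fun p : ℕ × ℕ => f (p.1 * p.2))

theorem Int.natCast_pow_dvd_of_forall_primeFactors {r : ℕ} (hr : r ≠ 0) (c : ℕ) {z : ℤ}
    (h : ∀ p ∈ r.primeFactors, (p : ℤ) ^ (c * r.factorization p) ∣ z) : (r : ℤ) ^ c ∣ z := by
  rw [← Nat.prod_factorization_pow_eq_self hr, Nat.prod_factorization_eq_prod_primeFactors,
    Nat.cast_prod, ← prod_pow]
  simp only [Nat.cast_pow, ← pow_mul]
  refine prod_dvd_of_coprime (fun p hp q hq hpq => ?_) fun p hp => ?_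
  · have := (Nat.coprime_primes (Nat.prime_of_mem_primeFactors hp)
      (Nat.prime_of_mem_primeFactors hq)).2 hpq
    exact (Nat.isCoprime_iff_coprime.2 this).pow
  · simpa [mul_comm] using h p hp

section MoebiusSum

variable {a : ℕ → ℤ} {c : ℕ}

theorem prime_pow_dvd_sum_moebius_mul {q : ℕ} (hq : q.Prime)
    (ha : ∀ k e, ¬ q ∣ e → (q : ℤ) ^ (c * (k + 1)) ∣ a (q ^ (k + 1) * e) - a (q ^ k * e))
    (k : ℕ) {m : ℕ} (hm : ¬ q ∣ m) :
    (q : ℤ) ^ (c * (k + 1)) ∣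
      ∑ d ∈ (q ^ (k + 1) * m).divisors, μ d * a (q ^ (k + 1) * m / d) := by
  have hqm : q.Coprime m := hq.coprime_iff_not_dvd.2 hm
  rw [(hqm.pow_left _).sum_divisors_mul_eq_sum_sum, Nat.sum_divisors_prime_pow hq,
    sum_range_succ', sum_range_succ', sum_eq_zero fun i _ => sum_eq_zero fun e he => ?_, zero_add,
    ← sum_add_distrib]
  · refine dvd_sum fun e he => ?_
    have he : e ∣ m := Nat.dvd_of_mem_divisors he
    have hqe : q.Coprime e := hqm.coprime_dvd_right he
    have hdiv₀ : q ^ (k + 1) * m / e = q ^ (k + 1) * (m / e) := Nat.mul_div_assoc _ he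
    have hdiv₁ : q ^ (k + 1) * m / (q * e) = q ^ k * (m / e) := by
      rw [Nat.mul_div_mul_comm (dvd_pow_self q k.succ_ne_zero) he, pow_succ,
        Nat.mul_div_cancel _ hq.pos]
    have hme : ¬ q ∣ m / e := fun h => hm (h.trans (Nat.div_dvd_of_dvd he))
    rw [zero_add, pow_one, pow_zero, one_mul, hdiv₀, hdiv₁,
      isMultiplicative_moebius.map_mul_of_coprime hqe, moebius_apply_prime hq]
    exact ((ha k _ hme).mul_left (μ e)).trans (dvd_of_eq (by ring))
  · have hqe : (q ^ (i + 1 + 1)).Coprime e :=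
      (hqm.coprime_dvd_right (Nat.dvd_of_mem_divisors he)).pow_left _
    rw [isMultiplicative_moebius.map_mul_of_coprime hqe, moebius_apply_prime_pow hq (by omega)]
    simp

theorem pow_dvd_sum_moebius_mul
    (ha : ∀ q k e : ℕ, q.Prime → ¬ q ∣ e →
      (q : ℤ) ^ (c * (k + 1)) ∣ a (q ^ (k + 1) * e) - a (q ^ k * e))
    (r : ℕ) : (r : ℤ) ^ c ∣ ∑ d ∈ r.divisors, μ (r / d) * a d := by
  rcases eq_or_ne r 0 with rfl | hr
  · simp
  rw [← Nat.sum_divisorsAntidiagonal' (fun x y => μ x * a y),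
    Nat.sum_divisorsAntidiagonal (fun x y => μ x * a y)]
  refine Int.natCast_pow_dvd_of_forall_primeFactors hr c fun q hq => ?_
  have hq' := Nat.prime_of_mem_primeFactors hq
  obtain ⟨k, hk⟩ : ∃ k, r.factorization q = k + 1 :=
    Nat.exists_eq_succ_of_ne_zero
      (hq'.factorization_pos_of_dvd hr (Nat.dvd_of_mem_primeFactors hq)).ne'
  have := prime_pow_dvd_sum_moebius_mul hq' (ha q · · hq') k (Nat.not_dvd_ordCompl hq' hr)
  rwa [← hk, Nat.ordProj_mul_ordCompl_eq_self] at this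

end MoebiusSum

theorem prod_add_natCast_eq_prod_of_reflection {R : Type*} [CommRing R] {n : ℕ} {T : Finset ℕ}
    (hT : ∀ i ∈ T, i ≤ n ∧ n - i ∈ T ∧ 2 * i ≠ n) {c : R} (hc : c * c = 0) (hcn : c * n = 0) :
    ∏ i ∈ T, (c + i) = ∏ i ∈ T, (i : R) := by
  refine prod_eq_prod_of_involution (n - ·) (fun i hi => (hT i hi).2.1)
    (fun i hi => Nat.sub_sub_self (hT i hi).1) (fun i hi => by have := hT i hi; omega)
    fun i hi => ?_
  rw [Nat.cast_sub (hT i hi).1]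
  linear_combination hc + hcn

def nonMultiplesBelow (q n : ℕ) : Finset ℕ := {i ∈ Ico 1 n | ¬ q ∣ i}

section NonMultiplesBelow

variable {q n : ℕ}

theorem le_of_mem_nonMultiplesBelow {i : ℕ} (hi : i ∈ nonMultiplesBelow q n) : i ≤ n :=
  (mem_Ico.1 (mem_filter.1 hi).1).2.le

theorem sub_mem_nonMultiplesBelow (hqn : q ∣ n) {i : ℕ} (hi : i ∈ nonMultiplesBelow q n) :
    n - i ∈ nonMultiplesBelow q n := by
  simp only [nonMultiplesBelow, mem_filter, mem_Ico] at hi ⊢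
  refine ⟨by omega, fun h => hi.2 ?_⟩
  simpa [Nat.sub_sub_self hi.1.2.le] using Nat.dvd_sub hqn h

theorem isUnit_prod_nonMultiplesBelow (hq : q.Prime) (j : ℕ) :
    IsUnit (∏ i ∈ nonMultiplesBelow q n, (i : ZMod (q ^ j))) := by
  rw [← Nat.cast_prod, ZMod.isUnit_iff_coprime]
  exact Nat.Coprime.prod_left fun i hi =>
    ((hq.coprime_iff_not_dvd.2 (mem_filter.1 hi).2).symm).pow_right j

theorem prod_Ico_eq_prod_nonMultiplesBelow_mul {M : Type*} [CommMonoid M] (f : ℕ → M)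
    (hq : 0 < q) (m : ℕ) :
    ∏ i ∈ Ico 1 (q * m), f i =
      (∏ i ∈ nonMultiplesBelow q (q * m), f i) * ∏ j ∈ Ico 1 m, f (q * j) := by
  rw [nonMultiplesBelow, ← prod_filter_not_mul_prod_filter _ (q ∣ ·)]
  congr 1
  have himage : {i ∈ Ico 1 (q * m) | q ∣ i} = (Ico 1 m).image (q * ·) := by
    ext i
    simp only [mem_filter, mem_Ico, mem_image]
    constructor
    · rintro ⟨⟨h1, h2⟩, j, rfl⟩
      exact ⟨j, ⟨Nat.pos_of_ne_zero (by rintro rfl; simp at h1), Nat.lt_of_mul_lt_mul_left h2⟩, rfl⟩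
    · rintro ⟨j, ⟨h1, h2⟩, rfl⟩
      exact ⟨⟨by nlinarith, by nlinarith⟩, dvd_mul_right q j⟩
  rw [himage, prod_image fun i _ j _ h => Nat.eq_of_mul_eq_mul_left hq h]

theorem Nat.Prime.dvd_of_two_mul_eq (hq : q.Prime) (hqn : q ∣ n) (h4 : q = 2 → 4 ∣ n) {i : ℕ}
    (hi : 2 * i = n) : q ∣ i := by
  subst hi
  rcases eq_or_ne q 2 with rfl | hq2
  · exact Nat.dvd_of_mul_dvd_mul_left two_pos (h4 rfl)
  · exact (Nat.Coprime.dvd_mul_left ((Nat.coprime_primes hq prime_two).2 hq2)).1 hqn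

theorem prod_nonMultiplesBelow_add {R : Type*} [CommRing R] (hq : q.Prime) (hqn : q ∣ n)
    (h4 : q = 2 → 4 ∣ n) {c : R} (hc : c * c = 0) (hcn : c * n = 0) :
    ∏ i ∈ nonMultiplesBelow q n, (c + i) = ∏ i ∈ nonMultiplesBelow q n, (i : R) :=
  prod_add_natCast_eq_prod_of_reflection (fun _ hi => ⟨le_of_mem_nonMultiplesBelow hi,
    sub_mem_nonMultiplesBelow hqn hi,
    fun h2i => (mem_filter.1 hi).2 (hq.dvd_of_two_mul_eq hqn h4 h2i)⟩) hc hcn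

theorem prod_nonMultiplesBelow_two_add {R : Type*} [CommRing R] {e : ℕ} (he : ¬ 2 ∣ e) {c : R}
    (hc : c * c = 0) (hcn : c * (2 * e : ℕ) = 0) (hfix : c + e = -e) :
    ∏ i ∈ nonMultiplesBelow 2 (2 * e), (c + i) = -∏ i ∈ nonMultiplesBelow 2 (2 * e), (i : R) := by
  have heT : e ∈ nonMultiplesBelow 2 (2 * e) := by
    simp only [nonMultiplesBelow, mem_filter, mem_Ico]
    omega
  have hrest : ∏ i ∈ (nonMultiplesBelow 2 (2 * e)).erase e, (c + i) =
      ∏ i ∈ (nonMultiplesBelow 2 (2 * e)).erase e, (i : R) := by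
    refine prod_add_natCast_eq_prod_of_reflection (fun i hi => ?_) hc hcn
    obtain ⟨hie, hiT⟩ := mem_erase.1 hi
    have := le_of_mem_nonMultiplesBelow hiT
    exact ⟨this, mem_erase.2 ⟨by omega, sub_mem_nonMultiplesBelow (dvd_mul_right 2 e) hiT⟩,
      by omega⟩
  rw [← mul_prod_erase _ _ heT, ← mul_prod_erase _ _ heT, hrest, hfix, neg_mul]

end NonMultiplesBelow

section Binomial

variable {s : ℕ}

theorem choose_mul_factorial_eq_prod_Ico (hs : 0 < s) (n : ℕ) :
    (s * n - 1).choose (n - 1) * (n - 1)! = ∏ i ∈ Ico 1 n, ((s - 1) * n + i) := by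
  have h : (s - 1) * n + (n - 1) = s * n - 1 := by
    rcases n.eq_zero_or_pos with rfl | hn
    · simp
    have := Nat.sub_one_mul s n
    have := Nat.le_mul_of_pos_left n hs
    omega
  rw [prod_Ico_eq_prod_range, ← h, mul_comm, ← descFactorial_eq_factorial_mul_choose,
    add_descFactorial_eq_ascFactorial, ascFactorial_eq_prod_range]
  simp only [add_assoc, add_comm 1]

theorem choose_mul_prod_nonMultiplesBelow (hs : 0 < s) {q : ℕ} (hq : 0 < q) (m : ℕ) :
    (s * (q * m) - 1).choose (q * m - 1) * ∏ i ∈ nonMultiplesBelow q (q * m), i =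
      (s * m - 1).choose (m - 1) *
        ∏ i ∈ nonMultiplesBelow q (q * m), ((s - 1) * (q * m) + i) := by
  rcases m.eq_zero_or_pos with rfl | hm
  · simp [nonMultiplesBelow]
  have hprod_id {n : ℕ} (hn : 0 < n) : ∏ i ∈ Ico 1 n, i = (n - 1)! := by
    rw [← prod_Ico_id_eq_factorial, Nat.sub_add_cancel hn]
  have hprod_mul (g : ℕ → ℕ) : ∏ j ∈ Ico 1 m, q * g j = q ^ (m - 1) * ∏ j ∈ Ico 1 m, g j := by
    rw [prod_mul_distrib, prod_const, card_Ico]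
  refine Nat.eq_of_mul_eq_mul_right
    (Nat.mul_pos (Nat.pow_pos (n := m - 1) hq) (m - 1).factorial_pos) ?_
  calc _ = (s * (q * m) - 1).choose (q * m - 1) * (q * m - 1)! := by
        rw [← hprod_id (Nat.mul_pos hq hm), prod_Ico_eq_prod_nonMultiplesBelow_mul _ hq,
          hprod_mul (fun j => j), hprod_id hm, mul_assoc]
    _ = (∏ i ∈ nonMultiplesBelow q (q * m), ((s - 1) * (q * m) + i)) *
          ∏ j ∈ Ico 1 m, q * ((s - 1) * m + j) := by
        rw [choose_mul_factorial_eq_prod_Ico hs, prod_Ico_eq_prod_nonMultiplesBelow_mul _ hq]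
        congr 1
        exact prod_congr rfl fun j _ => by ring
    _ = _ := by
        rw [hprod_mul, ← choose_mul_factorial_eq_prod_Ico hs]
        ring

theorem natCast_sub_one_mul_two_mul_add (hs : Even s) (hs0 : 0 < s) (e : ℕ) :
    (((s - 1) * (2 * e) : ℕ) : ZMod 4) + e = -e := by
  rw [eq_neg_iff_add_eq_zero, add_assoc, ← Nat.cast_add, ← Nat.cast_add, ZMod.natCast_eq_zero_iff]
  have hsn : (s - 1) * (2 * e) + (e + e) = s * (2 * e) := by
    have := Nat.sub_one_mul s (2 * e)
    have := Nat.le_mul_of_pos_left (2 * e) hs0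
    omega
  obtain ⟨t, rfl⟩ := hs.two_dvd
  exact ⟨t * e, by rw [hsn]; ring⟩

theorem neg_one_pow_mul_prod_nonMultiplesBelow_add (hs : Even s) (hs0 : 0 < s) {q : ℕ}
    (hq : q.Prime) (k : ℕ) {e : ℕ} (he : ¬ q ∣ e) :
    (-1) ^ (q * (q ^ k * e)) * ∏ i ∈ nonMultiplesBelow q (q * (q ^ k * e)),
        (((s - 1) * (q * (q ^ k * e)) + i : ℕ) : ZMod (q ^ (2 * (k + 1)))) =
      (-1) ^ (q ^ k * e) * ∏ i ∈ nonMultiplesBelow q (q * (q ^ k * e)), (i : ZMod _) := by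
  have hqn : q ^ (k + 1) ∣ q * (q ^ k * e) := ⟨e, by rw [pow_succ', mul_assoc]⟩
  generalize hn : q * (q ^ k * e) = n at hqn ⊢
  simp only [Nat.cast_add]
  have hsq : q ^ (2 * (k + 1)) = q ^ (k + 1) * q ^ (k + 1) := by rw [two_mul, pow_add]
  have hc : (((s - 1) * n : ℕ) : ZMod (q ^ (2 * (k + 1)))) * ((s - 1) * n : ℕ) = 0 := by
    rw [← Nat.cast_mul, ZMod.natCast_eq_zero_iff, hsq]
    exact mul_dvd_mul (hqn.mul_left _) (hqn.mul_left _)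
  have hcn : (((s - 1) * n : ℕ) : ZMod (q ^ (2 * (k + 1)))) * n = 0 := by
    rw [← Nat.cast_mul, ZMod.natCast_eq_zero_iff, hsq]
    exact mul_dvd_mul (hqn.mul_left _) hqn
  rcases hq.eq_two_or_odd' with rfl | hodd
  · cases k with
    | zero =>
      obtain rfl : 2 * e = n := by rw [← hn, pow_zero, one_mul]
      rw [prod_nonMultiplesBelow_two_add he hc hcn (natCast_sub_one_mul_two_mul_add hs hs0 e),
        (even_two_mul e).neg_one_pow, pow_zero, Nat.one_mul,
        (Nat.odd_iff.2 (Nat.two_dvd_ne_zero.1 he)).neg_one_pow]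
      ring
    | succ j =>
      have hm : Even (2 ^ (j + 1) * e) := (Nat.even_pow.2 ⟨even_two, j.succ_ne_zero⟩).mul_right e
      rw [prod_nonMultiplesBelow_add prime_two ((dvd_pow_self 2 (succ_ne_zero _)).trans hqn)
          (fun _ => ⟨2 ^ j * e, by rw [← hn]; ring⟩) hc hcn,
        ← hn, (hm.mul_left 2).neg_one_pow, hm.neg_one_pow]
  · rw [prod_nonMultiplesBelow_add hq ((dvd_pow_self q k.succ_ne_zero).trans hqn)
        (fun h => absurd hodd (h ▸ Nat.not_odd_iff_even.2 even_two)) hc hcn,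
      ← hn, pow_mul _ q, hodd.neg_one_pow]

def signedChoose (s d : ℕ) : ℤ := (-1) ^ d * ((s * d - 1).choose (d - 1) : ℤ)

theorem pow_dvd_signedChoose_sub (hs : Even s) (hs0 : 0 < s) {q : ℕ} (hq : q.Prime) (k : ℕ)
    {e : ℕ} (he : ¬ q ∣ e) :
    (q : ℤ) ^ (2 * (k + 1)) ∣ signedChoose s (q ^ (k + 1) * e) - signedChoose s (q ^ k * e) := by
  have hid := congrArg (Nat.cast : ℕ → ZMod (q ^ (2 * (k + 1))))
    (choose_mul_prod_nonMultiplesBelow hs0 hq.pos (q ^ k * e))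
  simp only [Nat.cast_mul, Nat.cast_prod] at hid
  have hsign := neg_one_pow_mul_prod_nonMultiplesBelow_add hs hs0 hq k he
  rw [pow_succ', mul_assoc, ← Nat.cast_pow, ← ZMod.intCast_eq_intCast_iff_dvd_sub, signedChoose,
    signedChoose]
  push_cast
  refine (isUnit_prod_nonMultiplesBelow (n := q * (q ^ k * e)) hq _).mul_right_cancel ?_
  linear_combination
    (-(((s * (q ^ k * e) - 1).choose (q ^ k * e - 1) : ℕ) : ZMod (q ^ (2 * (k + 1))))) * hsign -
      (-1) ^ (q * (q ^ k * e)) * hid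

end Binomial

theorem sq_dvd_sum_moebius_mul_signedChoose {s : ℕ} (hs : Even s) (hs0 : 0 < s) (r : ℕ) :
    (r : ℤ) ^ 2 ∣ ∑ d ∈ r.divisors, μ (r / d) * signedChoose s d :=
  pow_dvd_sum_moebius_mul (fun _ k _ hq he => pow_dvd_signedChoose_sub hs hs0 hq k he) r

theorem stmt18_general (p : ℤ) (hp : 2 ≤ p) (r : ℕ) :
    (((r : ℤ) ^ 2) ∣
        ∑ d ∈ r.divisors, (ArithmeticFunction.moebius (r / d) : ℤ) *
          (-1 : ℤ) ^ (d + 1) * ((2 * d - 1).choose (d - 1) : ℤ)) ∧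
      (((r : ℤ) ^ 2) ∣
        ∑ d ∈ r.divisors, (ArithmeticFunction.moebius (r / d) : ℤ) *
          (-1 : ℤ) ^ d * (((2 * p + 2).toNat * d - 1).choose (d - 1) : ℤ)) := by
  constructor
  · rw [← dvd_neg, ← sum_neg_distrib]
    simpa [signedChoose, pow_succ, mul_assoc] using
      sq_dvd_sum_moebius_mul_signedChoose even_two two_pos r
  · simpa [signedChoose, mul_assoc] using sq_dvd_sum_moebius_mul_signedChoose
      (s := (2 * p + 2).toNat) ⟨(p + 1).toNat, by omega⟩ (by omega) r

theorem stmt18 (p : ℤ) (hp : 2 ≤ p) (r : ℕ) (hr : 1 ≤ r) :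
    (((r : ℤ) ^ 2) ∣
        ∑ d ∈ r.divisors, (ArithmeticFunction.moebius (r / d) : ℤ) *
          (-1 : ℤ) ^ (d + 1) * ((2 * d - 1).choose (d - 1) : ℤ)) ∧
      (((r : ℤ) ^ 2) ∣
        ∑ d ∈ r.divisors, (ArithmeticFunction.moebius (r / d) : ℤ) *
          (-1 : ℤ) ^ d * (((2 * p + 2).toNat * d - 1).choose (d - 1) : ℤ)) :=
  stmt18_general p hp r
end
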